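/- arXiv:2012.11275 — 10 statements merged into one kernel-verified Lean document; each statement's English description precedes it below -/
import Mathlib

section
/- Let n ≥ 1, ℓ ≥ 0, and let Q : ℝⁿ → ℝⁿ be smooth. For each even M ∈ {0, 2, …, 2ℓ} let L_{(M)} : ℝⁿ → ℝⁿ be a smooth vector field whose symmetrized Jacobian S_{(M)ab} = ½(∂L_{(M)a}/∂q^b + ∂L_{(M)b}/∂q^a) is a second-order Killing tensor of ℝⁿ. Assume for all q and indices a: ∂(L_{(2ℓ)b} Q^b)/∂q^a = −2 S_{(2ℓ)ab} Q^b, and for each odd k with 1 ≤ k ≤ 2ℓ−1, ∂(L_{(k−1)b} Q^b)/∂q^a = −2 S_{(k−1)ab} Q^b − k(k+1) L_{(k+1)a}. Then along every solution q(t) of q̈^a = −Q^a(q), the quantity I₍₂₎(t) = −Σ_{j=0}^{ℓ} (t^{2j+1}/(2j+1)) S_{(2j)ab} q̇^a q̇^b + Σ_{j=0}^{ℓ} t^{2j} L_{(2j)a} q̇^a + Σ_{j=0}^{ℓ} (t^{2j+1}/(2j+1)) L_{(2j)a} Q^a is constant in t. -/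
/-- Spatial partial derivative `∂f/∂q^a` of a function `f : ℝⁿ → ℝ`. -/
noncomputable def dS {n : ℕ} (f : (Fin n → ℝ) → ℝ) (a : Fin n) (q : Fin n → ℝ) : ℝ :=
  deriv (fun s => f (Function.update q a s)) (q a)

/-- A second-order Killing tensor of the Euclidean space `ℝⁿ`: a smooth,
symmetric matrix-valued map `C_{ab}(q)` satisfying the Killing tensor equation
`C_{(ab,c)} = 0` (in Cartesian coordinates). -/
def IsKillingTensor {n : ℕ} (C : (Fin n → ℝ) → Fin n → Fin n → ℝ) : Prop :=
  (∀ a b, ContDiff ℝ (⊤ : ℕ∞) (fun q => C q a b)) ∧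
  (∀ q a b, C q a b = C q b a) ∧
  (∀ q, ∀ a b c : Fin n,
    dS (fun q => C q a b) c q + dS (fun q => C q b c) a q + dS (fun q => C q c a) b q = 0)

/-- The symmetrized Jacobian `L_{(a,b)} = ½(∂L_a/∂q^b + ∂L_b/∂q^a)` of a vector
field `L` on `ℝⁿ`. -/
noncomputable def SymJac {n : ℕ} (L : (Fin n → ℝ) → Fin n → ℝ)
    (q : Fin n → ℝ) (a b : Fin n) : ℝ :=
  (1 / 2) * (dS (fun q => L q a) b q + dS (fun q => L q b) a q)

lemma dS_eq_fderiv {n : ℕ} {f : (Fin n → ℝ) → ℝ} {x : Fin n → ℝ}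
    (hf : DifferentiableAt ℝ f x) (a : Fin n) :
    dS f a x = fderiv ℝ f x (Pi.single a 1) := by
  have h3 : HasFDerivAt f (fderiv ℝ f x) (Function.update x a (x a)) := by
    rw [Function.update_eq_self]; exact hf.hasFDerivAt
  have h1 : HasDerivAt (fun s => f (Function.update x a s))
      (fderiv ℝ f x (Pi.single a 1)) (x a) :=
    h3.comp_hasDerivAt (x a) (hasDerivAt_update x a (x a))
  exact h1.deriv

lemma fderiv_pi_apply {n : ℕ} {f : (Fin n → ℝ) → ℝ} {x : Fin n → ℝ}
    (hf : DifferentiableAt ℝ f x) (w : Fin n → ℝ) :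
    fderiv ℝ f x w = ∑ a, dS f a x * w a := by
  have hw : w = ∑ a : Fin n, w a • (Pi.single a (1:ℝ) : Fin n → ℝ) := by
    funext j
    rw [Finset.sum_apply]
    simp [Pi.single_apply, eq_comm]
  conv_lhs => rw [hw]
  rw [map_sum]
  refine Finset.sum_congr rfl fun a _ => ?_
  rw [map_smul, dS_eq_fderiv hf a, smul_eq_mul, mul_comm]

lemma hasDerivAt_comp_curve {n : ℕ} {f : (Fin n → ℝ) → ℝ} (hf : ContDiff ℝ (⊤ : ℕ∞) f)
    {q : ℝ → Fin n → ℝ} (hq : ContDiff ℝ (⊤ : ℕ∞) q) (t : ℝ) :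
    HasDerivAt (fun s => f (q s)) (∑ a, dS f a (q t) * deriv (fun u => q u a) t) t := by
  have hqc : ∀ a, HasDerivAt (fun u => q u a) (deriv (fun u => q u a) t) t := fun a =>
    (((contDiff_pi.mp hq) a).differentiable (by simp) t).hasDerivAt
  have hqd : HasDerivAt q (fun a => deriv (fun u => q u a) t) t := hasDerivAt_pi.mpr hqc
  have hfd := ((hf.differentiable (by simp)) (q t)).hasFDerivAt
  have h := hfd.comp_hasDerivAt t hqd
  rwa [fderiv_pi_apply ((hf.differentiable (by simp)) (q t)) _] at h

lemma cyclic_contract {n : ℕ} (A : Fin n → Fin n → Fin n → ℝ) (v : Fin n → ℝ)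
    (hcyc : ∀ a b c, A a b c + A b c a + A c a b = 0) :
    ∑ a, ∑ b, (∑ c, A a b c * v c) * v a * v b = 0 := by
  have key : ∀ B : Fin n → Fin n → Fin n → ℝ,
      (∑ a, ∑ b, ∑ c, B b c a * (v a * v b * v c))
        = ∑ a, ∑ b, ∑ c, B a b c * (v a * v b * v c) := by
    intro B
    calc ∑ a, ∑ b, ∑ c, B b c a * (v a * v b * v c)
        = ∑ b, ∑ a, ∑ c, B b c a * (v a * v b * v c) := Finset.sum_comm
      _ = ∑ b, ∑ c, ∑ a, B b c a * (v a * v b * v c) :=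
          Finset.sum_congr rfl fun b _ => Finset.sum_comm
      _ = ∑ a, ∑ b, ∑ c, B a b c * (v a * v b * v c) :=
          Finset.sum_congr rfl fun a _ => Finset.sum_congr rfl fun b _ =>
            Finset.sum_congr rfl fun c _ => by ring
  have h0 : ∑ a, ∑ b, ∑ c, (A a b c + A b c a + A c a b) * (v a * v b * v c) = 0 := by
    simp [hcyc]
  have hexp : ∑ a, ∑ b, ∑ c, (A a b c + A b c a + A c a b) * (v a * v b * v c)
      = 3 * ∑ a, ∑ b, ∑ c, A a b c * (v a * v b * v c) := by
    have h1 := key A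
    have h2 := key (fun a b c => A b c a)
    calc ∑ a, ∑ b, ∑ c, (A a b c + A b c a + A c a b) * (v a * v b * v c)
        = (∑ a, ∑ b, ∑ c, A a b c * (v a * v b * v c))
          + (∑ a, ∑ b, ∑ c, A b c a * (v a * v b * v c))
          + (∑ a, ∑ b, ∑ c, A c a b * (v a * v b * v c)) := by
          simp only [add_mul, Finset.sum_add_distrib]
      _ = 3 * ∑ a, ∑ b, ∑ c, A a b c * (v a * v b * v c) := by
          rw [h1, h2, h1]; ring
  have hS1 : ∑ a, ∑ b, ∑ c, A a b c * (v a * v b * v c) = 0 := by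
    have h3 : (3:ℝ) * ∑ a, ∑ b, ∑ c, A a b c * (v a * v b * v c) = 0 := by
      rw [← hexp]; exact h0
    linarith
  calc ∑ a, ∑ b, (∑ c, A a b c * v c) * v a * v b
      = ∑ a, ∑ b, ∑ c, A a b c * (v a * v b * v c) := by
        refine Finset.sum_congr rfl fun a _ => Finset.sum_congr rfl fun b _ => ?_
        rw [Finset.sum_mul, Finset.sum_mul]
        exact Finset.sum_congr rfl fun c _ => by ring
    _ = 0 := hS1

lemma sym_contract {n : ℕ} (D : Fin n → Fin n → ℝ) (v : Fin n → ℝ) :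
    ∑ a, (∑ b, D a b * v b) * v a
      = ∑ a, ∑ b, ((1/2) * (D a b + D b a)) * v a * v b := by
  have hswap : ∑ a, ∑ b, D b a * (v a * v b) = ∑ a, ∑ b, D a b * (v a * v b) := by
    rw [Finset.sum_comm]
    exact Finset.sum_congr rfl fun a _ => Finset.sum_congr rfl fun b _ => by ring
  have expand : ∑ a, ∑ b, ((1/2) * (D a b + D b a)) * v a * v b
      = (1/2) * (∑ a, ∑ b, D a b * (v a * v b))
        + (1/2) * (∑ a, ∑ b, D b a * (v a * v b)) := by
    rw [Finset.mul_sum, Finset.mul_sum, ← Finset.sum_add_distrib]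
    refine Finset.sum_congr rfl fun a _ => ?_
    rw [Finset.mul_sum, Finset.mul_sum, ← Finset.sum_add_distrib]
    exact Finset.sum_congr rfl fun b _ => by ring
  rw [expand, hswap]
  have : ∑ a, (∑ b, D a b * v b) * v a = ∑ a, ∑ b, D a b * (v a * v b) := by
    refine Finset.sum_congr rfl fun a _ => ?_
    rw [Finset.sum_mul]
    exact Finset.sum_congr rfl fun b _ => by ring
  rw [this]; ring

lemma final_algebra (ℓ : ℕ) (t : ℝ) (F X H G : ℕ → ℝ) :
    -(∑ j ∈ Finset.range (ℓ+1),
        (t^(2*j) * F j + t^(2*j+1)/((2*j+1:ℕ):ℝ) * (-2 * X j)))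
    + ∑ j ∈ Finset.range (ℓ+1),
        (((2*j:ℕ):ℝ) * t^(2*j-1) * G j + t^(2*j) * (F j - H j))
    + ((∑ j ∈ Finset.range ℓ,
          (t^(2*j) * H j + t^(2*j+1)/((2*j+1:ℕ):ℝ)
            * (-2 * X j - (((2*j+1)*(2*(j+1)):ℕ):ℝ) * G (j+1))))
        + (t^(2*ℓ) * H ℓ + t^(2*ℓ+1)/((2*ℓ+1:ℕ):ℝ) * (-2 * X ℓ))) = 0 := by
  have hNe : ∀ j:ℕ, ((2*j+1:ℕ):ℝ) ≠ 0 := fun j => Nat.cast_ne_zero.mpr (by omega)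
  set W : ℕ → ℝ := fun j => ((2*j:ℕ):ℝ) * t^(2*j-1) * G j with hWdef
  have hper : ∀ j : ℕ,
      -(t^(2*j) * F j + t^(2*j+1)/((2*j+1:ℕ):ℝ) * (-2 * X j))
      + (((2*j:ℕ):ℝ) * t^(2*j-1) * G j + t^(2*j) * (F j - H j))
      + (t^(2*j) * H j + t^(2*j+1)/((2*j+1:ℕ):ℝ)
          * (-2 * X j - (((2*j+1)*(2*(j+1)):ℕ):ℝ) * G (j+1)))
      = W j - W (j+1) := by
    intro j
    have e1 : 2*(j+1)-1 = 2*j+1 := by omega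
    simp only [hWdef, e1]
    push_cast
    field_simp
    ring
  have key : ∑ j ∈ Finset.range (ℓ+1),
      (-(t^(2*j) * F j + t^(2*j+1)/((2*j+1:ℕ):ℝ) * (-2 * X j))
      + (((2*j:ℕ):ℝ) * t^(2*j-1) * G j + t^(2*j) * (F j - H j))
      + (t^(2*j) * H j + t^(2*j+1)/((2*j+1:ℕ):ℝ)
          * (-2 * X j - (((2*j+1)*(2*(j+1)):ℕ):ℝ) * G (j+1))))
      = W 0 - W (ℓ+1) := by
    rw [← Finset.sum_range_sub' W (ℓ+1)]
    exact Finset.sum_congr rfl fun j _ => hper j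
  have split : ∑ j ∈ Finset.range (ℓ+1),
      (-(t^(2*j) * F j + t^(2*j+1)/((2*j+1:ℕ):ℝ) * (-2 * X j))
      + (((2*j:ℕ):ℝ) * t^(2*j-1) * G j + t^(2*j) * (F j - H j))
      + (t^(2*j) * H j + t^(2*j+1)/((2*j+1:ℕ):ℝ)
          * (-2 * X j - (((2*j+1)*(2*(j+1)):ℕ):ℝ) * G (j+1))))
      = -(∑ j ∈ Finset.range (ℓ+1),
            (t^(2*j) * F j + t^(2*j+1)/((2*j+1:ℕ):ℝ) * (-2 * X j)))
        + ∑ j ∈ Finset.range (ℓ+1),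
            (((2*j:ℕ):ℝ) * t^(2*j-1) * G j + t^(2*j) * (F j - H j))
        + ∑ j ∈ Finset.range (ℓ+1),
            (t^(2*j) * H j + t^(2*j+1)/((2*j+1:ℕ):ℝ)
              * (-2 * X j - (((2*j+1)*(2*(j+1)):ℕ):ℝ) * G (j+1))) := by
    simp only [Finset.sum_add_distrib, Finset.sum_neg_distrib]
  have hC : ∑ j ∈ Finset.range (ℓ+1),
      (t^(2*j) * H j + t^(2*j+1)/((2*j+1:ℕ):ℝ)
        * (-2 * X j - (((2*j+1)*(2*(j+1)):ℕ):ℝ) * G (j+1)))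
      = (∑ j ∈ Finset.range ℓ,
          (t^(2*j) * H j + t^(2*j+1)/((2*j+1:ℕ):ℝ)
            * (-2 * X j - (((2*j+1)*(2*(j+1)):ℕ):ℝ) * G (j+1))))
        + (t^(2*ℓ) * H ℓ + t^(2*ℓ+1)/((2*ℓ+1:ℕ):ℝ) * (-2 * X ℓ))
        - t^(2*ℓ+1)/((2*ℓ+1:ℕ):ℝ) * ((((2*ℓ+1)*(2*(ℓ+1)):ℕ):ℝ) * G (ℓ+1)) := by
    rw [Finset.sum_range_succ]
    ring
  have hW0 : W 0 = 0 := by simp [hWdef]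
  have hWl : W (ℓ+1) = t^(2*ℓ+1)/((2*ℓ+1:ℕ):ℝ) * ((((2*ℓ+1)*(2*(ℓ+1)):ℕ):ℝ) * G (ℓ+1)) := by
    have e1 : 2*(ℓ+1)-1 = 2*ℓ+1 := by omega
    simp only [hWdef, e1]
    push_cast
    field_simp
  have hgoal := key
  rw [split] at hgoal
  rw [hC] at hgoal
  rw [hW0, hWl] at hgoal
  linarith [hgoal]

/-- The odd-powers time-dependent quadratic first integral `I₍₂₎` of Theorem 3
for the system `q̈^a = −Q^a(q)`. -/
theorem odd_powers_quadratic_first_integral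
    (n ℓ : ℕ) (hn : 1 ≤ n)
    (Q : (Fin n → ℝ) → Fin n → ℝ) (hQ : ContDiff ℝ (⊤ : ℕ∞) Q)
    (L : ℕ → (Fin n → ℝ) → Fin n → ℝ)
    -- for each even `M = 2j ∈ {0, 2, …, 2ℓ}`, `L_{(M)}` is a smooth vector
    -- field whose symmetrized Jacobian is a Killing tensor
    (hLsm : ∀ j ≤ ℓ, ContDiff ℝ (⊤ : ℕ∞) (L (2 * j)))
    (hLKT : ∀ j ≤ ℓ, IsKillingTensor (SymJac (L (2 * j))))
    -- `(L_{(2ℓ)b} Q^b)_{,a} = −2 S_{(2ℓ)ab} Q^b`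
    (htop : ∀ q, ∀ a : Fin n,
      dS (fun q => ∑ b, L (2 * ℓ) q b * Q q b) a q =
        -2 * ∑ b, SymJac (L (2 * ℓ)) q a b * Q q b)
    -- for each odd `k` with `1 ≤ k ≤ 2ℓ−1`:
    -- `(L_{(k−1)b} Q^b)_{,a} = −2 S_{(k−1)ab} Q^b − k(k+1) L_{(k+1)a}`
    (hmid : ∀ k : ℕ, Odd k → 1 ≤ k → k ≤ 2 * ℓ - 1 → ∀ q, ∀ a : Fin n,
      dS (fun q => ∑ b, L (k - 1) q b * Q q b) a q =
        -2 * (∑ b, SymJac (L (k - 1)) q a b * Q q b)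
          - ((k * (k + 1) : ℕ) : ℝ) * L (k + 1) q a)
    -- a solution of `q̈^a = −Q^a(q)`
    (q : ℝ → Fin n → ℝ) (hq : ContDiff ℝ (⊤ : ℕ∞) q)
    (hode : ∀ t, ∀ a : Fin n,
      deriv (fun s => deriv (fun u => q u a) s) t = -(Q (q t) a)) :
    -- `I₍₂₎` is constant in `t`
    ∃ cst : ℝ, ∀ t : ℝ,
      -(∑ j ∈ Finset.range (ℓ + 1),
          (t ^ (2 * j + 1) / ((2 * j + 1 : ℕ) : ℝ)) *
            ∑ a, ∑ b, SymJac (L (2 * j)) (q t) a b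
              * deriv (fun u => q u a) t * deriv (fun u => q u b) t)
        + (∑ j ∈ Finset.range (ℓ + 1),
            t ^ (2 * j) * ∑ a, L (2 * j) (q t) a * deriv (fun u => q u a) t)
        + (∑ j ∈ Finset.range (ℓ + 1),
            (t ^ (2 * j + 1) / ((2 * j + 1 : ℕ) : ℝ)) *
              ∑ a, L (2 * j) (q t) a * Q (q t) a)
      = cst := by
  classical
  have hv' : ∀ (t : ℝ) (a : Fin n),
      HasDerivAt (fun s => deriv (fun u => q u a) s) (-(Q (q t) a)) t := by
    intro t a
    have h1 : ContDiff ℝ (⊤ : ℕ∞) (fun u => q u a) := contDiff_pi.mp hq a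
    have h1' : ContDiff ℝ ((⊤:ℕ∞):WithTop ℕ∞) (fun u => q u a) := h1.of_le (by simp)
    have h2 : ContDiff ℝ ((⊤:ℕ∞):WithTop ℕ∞) (deriv (fun u => q u a)) :=
      (contDiff_infty_iff_deriv.mp h1').2
    have h3 := ((h2.differentiable (by simp)) t).hasDerivAt
    have h4 : deriv (deriv (fun u => q u a)) t = -(Q (q t) a) := hode t a
    rw [h4] at h3
    exact h3
  have hP : ∀ (j : ℕ) (t : ℝ),
      HasDerivAt (fun s : ℝ => s^(2*j+1) / ((2*j+1:ℕ):ℝ)) (t^(2*j)) t := by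
    intro j t
    have h := (hasDerivAt_pow (2*j+1) t).div_const ((2*j+1:ℕ):ℝ)
    have e : ((2*j+1:ℕ):ℝ) * t^(2*j+1-1) / ((2*j+1:ℕ):ℝ) = t^(2*j) := by
      rw [Nat.add_sub_cancel, mul_comm, mul_div_assoc,
        div_self (Nat.cast_ne_zero.mpr (by omega : 2*j+1 ≠ 0)), mul_one]
    rw [e] at h
    exact h
  let I : ℝ → ℝ := fun t =>
    -(∑ j ∈ Finset.range (ℓ + 1),
        (t ^ (2 * j + 1) / ((2 * j + 1 : ℕ) : ℝ)) *
          ∑ a, ∑ b, SymJac (L (2 * j)) (q t) a b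
            * deriv (fun u => q u a) t * deriv (fun u => q u b) t)
      + (∑ j ∈ Finset.range (ℓ + 1),
          t ^ (2 * j) * ∑ a, L (2 * j) (q t) a * deriv (fun u => q u a) t)
      + (∑ j ∈ Finset.range (ℓ + 1),
          (t ^ (2 * j + 1) / ((2 * j + 1 : ℕ) : ℝ)) *
            ∑ a, L (2 * j) (q t) a * Q (q t) a)
  have hI : ∀ t, HasDerivAt I 0 t := by
    intro t
    have hAall : ∀ j ∈ Finset.range (ℓ+1), HasDerivAt
        (fun s => (s ^ (2*j+1) / ((2*j+1:ℕ):ℝ)) *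
          ∑ a, ∑ b, SymJac (L (2*j)) (q s) a b
            * deriv (fun u => q u a) s * deriv (fun u => q u b) s)
        (t^(2*j) * (∑ a, ∑ b, SymJac (L (2*j)) (q t) a b * deriv (fun u => q u a) t * deriv (fun u => q u b) t) + t^(2*j+1)/((2*j+1:ℕ):ℝ) * (∑ a, ∑ b, (((∑ c, dS (fun x => SymJac (L (2*j)) x a b) c (q t) * deriv (fun u => q u c) t) * deriv (fun u => q u a) t + SymJac (L (2*j)) (q t) a b * (-(Q (q t) a))) * deriv (fun u => q u b) t + SymJac (L (2*j)) (q t) a b * deriv (fun u => q u a) t * (-(Q (q t) b))))) t := by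
      intro j hj
      have hjl : j ≤ ℓ := by have := Finset.mem_range.mp hj; omega
      exact (hP j t).mul (HasDerivAt.fun_sum fun a _ => HasDerivAt.fun_sum fun b _ =>
        ((hasDerivAt_comp_curve ((hLKT j hjl).1 a b) hq t).mul (hv' t a)).mul (hv' t b))
    have hBall : ∀ j ∈ Finset.range (ℓ+1), HasDerivAt
        (fun s => s ^ (2*j) * ∑ a, L (2*j) (q s) a * deriv (fun u => q u a) s)
        (((2*j:ℕ):ℝ) * t^(2*j-1) * (∑ a, L (2*j) (q t) a * deriv (fun u => q u a) t) + t^(2*j) * (∑ a, ((∑ c, dS (fun x => L (2*j) x a) c (q t) * deriv (fun u => q u c) t) * deriv (fun u => q u a) t + L (2*j) (q t) a * (-(Q (q t) a))))) t := by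
      intro j hj
      have hjl : j ≤ ℓ := by have := Finset.mem_range.mp hj; omega
      exact (hasDerivAt_pow (2*j) t).mul (HasDerivAt.fun_sum fun a _ =>
        (hasDerivAt_comp_curve (contDiff_pi.mp (hLsm j hjl) a) hq t).mul (hv' t a))
    have hCall : ∀ j ∈ Finset.range (ℓ+1), HasDerivAt
        (fun s => (s ^ (2*j+1) / ((2*j+1:ℕ):ℝ)) * ∑ a, L (2*j) (q s) a * Q (q s) a)
        (t^(2*j) * (∑ a, L (2*j) (q t) a * Q (q t) a) + t^(2*j+1)/((2*j+1:ℕ):ℝ) * (∑ c, dS (fun x => ∑ b, L (2*j) x b * Q x b) c (q t) * deriv (fun u => q u c) t)) t := by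
      intro j hj
      have hjl : j ≤ ℓ := by have := Finset.mem_range.mp hj; omega
      have hHsm : ContDiff ℝ (⊤ : ℕ∞) (fun x => ∑ b, L (2*j) x b * Q x b) :=
        ContDiff.sum fun b _ => (contDiff_pi.mp (hLsm j hjl) b).mul (contDiff_pi.mp hQ b)
      exact (hP j t).mul (hasDerivAt_comp_curve hHsm hq t)
    have htot : HasDerivAt I (-(∑ j ∈ Finset.range (ℓ+1), (t^(2*j) * (∑ a, ∑ b, SymJac (L (2*j)) (q t) a b * deriv (fun u => q u a) t * deriv (fun u => q u b) t) + t^(2*j+1)/((2*j+1:ℕ):ℝ) * (∑ a, ∑ b, (((∑ c, dS (fun x => SymJac (L (2*j)) x a b) c (q t) * deriv (fun u => q u c) t) * deriv (fun u => q u a) t + SymJac (L (2*j)) (q t) a b * (-(Q (q t) a))) * deriv (fun u => q u b) t + SymJac (L (2*j)) (q t) a b * deriv (fun u => q u a) t * (-(Q (q t) b)))))) + (∑ j ∈ Finset.range (ℓ+1), (((2*j:ℕ):ℝ) * t^(2*j-1) * (∑ a, L (2*j) (q t) a * deriv (fun u => q u a) t) + t^(2*j) * (∑ a, ((∑ c,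 dS (fun x => L (2*j) x a) c (q t) * deriv (fun u => q u c) t) * deriv (fun u => q u a) t + L (2*j) (q t) a * (-(Q (q t) a)))))) + (∑ j ∈ Finset.range (ℓ+1), (t^(2*j) * (∑ a, L (2*j) (q t) a * Q (q t) a) + t^(2*j+1)/((2*j+1:ℕ):ℝ) * (∑ c, dS (fun x => ∑ b, L (2*j) x b * Q x b) c (q t) * deriv (fun u => q u c) t)))) t :=
      ((HasDerivAt.fun_sum hAall).neg.add (HasDerivAt.fun_sum hBall)).add (HasDerivAt.fun_sum hCall)
    have hc1 : ∀ j, j ≤ ℓ → (∑ a, ∑ b, (((∑ c, dS (fun x => SymJac (L (2*j)) x a b) c (q t) * deriv (fun u => q u c) t) * deriv (fun u => q u a) t + SymJac (L (2*j)) (q t) a b * (-(Q (q t) a))) * deriv (fun u => q u b) t + SymJac (L (2*j)) (q t) a b * deriv (fun u => q u a) t * (-(Q (q t) b)))) = -2 * (∑ a, ∑ b, SymJac (L (2*j)) (q t) a b * deriv (fun u => q u a) t * Q (q t) b) := by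
      intro j hjl
      have hT1 : ∑ a, ∑ b, (∑ c, dS (fun x => SymJac (L (2*j)) x a b) c (q t) * deriv (fun u => q u c) t) * deriv (fun u => q u a) t * deriv (fun u => q u b) t = 0 :=
        cyclic_contract (fun a b c => dS (fun x => SymJac (L (2*j)) x a b) c (q t))
          (fun a => deriv (fun u => q u a) t)
          (fun a b c => (hLKT j hjl).2.2 (q t) a b c)
      have hsym : ∀ a b : Fin n, SymJac (L (2*j)) (q t) a b = SymJac (L (2*j)) (q t) b a :=
        fun a b => (hLKT j hjl).2.1 (q t) a b
      have hT2 : ∑ a, ∑ b, SymJac (L (2*j)) (q t) a b * Q (q t) a * deriv (fun u => q u b) t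
          = ∑ a, ∑ b, SymJac (L (2*j)) (q t) a b * deriv (fun u => q u a) t * Q (q t) b := by
        rw [Finset.sum_comm]
        refine Finset.sum_congr rfl fun a _ => Finset.sum_congr rfl fun b _ => ?_
        rw [hsym b a]; ring
      have hsplit : (∑ a, ∑ b, (((∑ c, dS (fun x => SymJac (L (2*j)) x a b) c (q t) * deriv (fun u => q u c) t) * deriv (fun u => q u a) t + SymJac (L (2*j)) (q t) a b * (-(Q (q t) a))) * deriv (fun u => q u b) t + SymJac (L (2*j)) (q t) a b * deriv (fun u => q u a) t * (-(Q (q t) b))))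
          = (∑ a, ∑ b, (∑ c, dS (fun x => SymJac (L (2*j)) x a b) c (q t) * deriv (fun u => q u c) t) * deriv (fun u => q u a) t * deriv (fun u => q u b) t)
            + (∑ a, ∑ b, SymJac (L (2*j)) (q t) a b * (-(Q (q t) a)) * deriv (fun u => q u b) t)
            + (∑ a, ∑ b, SymJac (L (2*j)) (q t) a b * deriv (fun u => q u a) t * (-(Q (q t) b))) := by
        calc (∑ a, ∑ b, (((∑ c, dS (fun x => SymJac (L (2*j)) x a b) c (q t) * deriv (fun u => q u c) t) * deriv (fun u => q u a) t + SymJac (L (2*j)) (q t) a b * (-(Q (q t) a))) * deriv (fun u => q u b) t + SymJac (L (2*j)) (q t) a b * deriv (fun u => q u a) t * (-(Q (q t) b))))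
            = ∑ a, ∑ b, ((∑ c, dS (fun x => SymJac (L (2*j)) x a b) c (q t) * deriv (fun u => q u c) t) * deriv (fun u => q u a) t * deriv (fun u => q u b) t
                + SymJac (L (2*j)) (q t) a b * (-(Q (q t) a)) * deriv (fun u => q u b) t
                + SymJac (L (2*j)) (q t) a b * deriv (fun u => q u a) t * (-(Q (q t) b))) :=
              Finset.sum_congr rfl fun a _ => Finset.sum_congr rfl fun b _ => by ring
          _ = _ := by simp only [Finset.sum_add_distrib]
      have hT2n : ∑ a, ∑ b, SymJac (L (2*j)) (q t) a b * (-(Q (q t) a)) * deriv (fun u => q u b) t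
          = -(∑ a, ∑ b, SymJac (L (2*j)) (q t) a b * Q (q t) a * deriv (fun u => q u b) t) := by
        rw [← Finset.sum_neg_distrib]
        refine Finset.sum_congr rfl fun a _ => ?_
        rw [← Finset.sum_neg_distrib]
        exact Finset.sum_congr rfl fun b _ => by ring
      have hT3n : ∑ a, ∑ b, SymJac (L (2*j)) (q t) a b * deriv (fun u => q u a) t * (-(Q (q t) b))
          = -(∑ a, ∑ b, SymJac (L (2*j)) (q t) a b * deriv (fun u => q u a) t * Q (q t) b) := by
        rw [← Finset.sum_neg_distrib]
        refine Finset.sum_congr rfl fun a _ => ?_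
        rw [← Finset.sum_neg_distrib]
        exact Finset.sum_congr rfl fun b _ => by ring
      rw [hsplit, hT1, hT2n, hT3n, hT2]; ring
    have hc2 : ∀ j, j ≤ ℓ → (∑ a, ((∑ c, dS (fun x => L (2*j) x a) c (q t) * deriv (fun u => q u c) t) * deriv (fun u => q u a) t + L (2*j) (q t) a * (-(Q (q t) a)))) = (∑ a, ∑ b, SymJac (L (2*j)) (q t) a b * deriv (fun u => q u a) t * deriv (fun u => q u b) t) - (∑ a, L (2*j) (q t) a * Q (q t) a) := by
      intro j hjl
      have h1 : ∑ a, (∑ c, dS (fun x => L (2*j) x a) c (q t) * deriv (fun u => q u c) t) * deriv (fun u => q u a) t = (∑ a, ∑ b, SymJac (L (2*j)) (q t) a b * deriv (fun u => q u a) t * deriv (fun u => q u b) t) := by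
        have hs := sym_contract (fun a c => dS (fun x => L (2*j) x a) c (q t))
          (fun a => deriv (fun u => q u a) t)
        exact hs.trans rfl
      have h2 : ∑ a, L (2*j) (q t) a * (-(Q (q t) a)) = -(∑ a, L (2*j) (q t) a * Q (q t) a) := by
        rw [← Finset.sum_neg_distrib]
        exact Finset.sum_congr rfl fun a _ => by ring
      rw [Finset.sum_add_distrib, h1, h2]; ring
    have hc3 : ∀ j, j < ℓ → (∑ c, dS (fun x => ∑ b, L (2*j) x b * Q x b) c (q t) * deriv (fun u => q u c) t) = -2 * (∑ a, ∑ b, SymJac (L (2*j)) (q t) a b * deriv (fun u => q u a) t * Q (q t) b) - (((2*j+1)*(2*(j+1)):ℕ):ℝ) * (∑ a, L (2*(j+1)) (q t) a * deriv (fun u => q u a) t) := by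
      intro j hjl
      have hk := hmid (2*j+1) ⟨j, by omega⟩ (by omega) (by omega)
      have e1 : 2*j+1-1 = 2*j := by omega
      have e2 : 2*j+1+1 = 2*(j+1) := by omega
      rw [e1, e2] at hk
      have hstep : ∀ c : Fin n, dS (fun x => ∑ b, L (2*j) x b * Q x b) c (q t) * deriv (fun u => q u c) t
          = -2 * (∑ b, SymJac (L (2*j)) (q t) c b * deriv (fun u => q u c) t * Q (q t) b)
            - (((2*j+1)*(2*(j+1)):ℕ):ℝ) * (L (2*(j+1)) (q t) c * deriv (fun u => q u c) t) := by
        intro c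
        have hz : (∑ b, SymJac (L (2*j)) (q t) c b * Q (q t) b) * deriv (fun u => q u c) t
            = ∑ b, SymJac (L (2*j)) (q t) c b * deriv (fun u => q u c) t * Q (q t) b := by
          rw [Finset.sum_mul]; exact Finset.sum_congr rfl fun b _ => by ring
        rw [hk (q t) c, sub_mul, mul_assoc, mul_assoc, hz]
      calc (∑ c, dS (fun x => ∑ b, L (2*j) x b * Q x b) c (q t) * deriv (fun u => q u c) t)
          = ∑ c, (-2 * (∑ b, SymJac (L (2*j)) (q t) c b * deriv (fun u => q u c) t * Q (q t) b)
              - (((2*j+1)*(2*(j+1)):ℕ):ℝ) * (L (2*(j+1)) (q t) c * deriv (fun u => q u c) t)) :=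
            Finset.sum_congr rfl fun c _ => hstep c
        _ = -2 * (∑ a, ∑ b, SymJac (L (2*j)) (q t) a b * deriv (fun u => q u a) t * Q (q t) b) - (((2*j+1)*(2*(j+1)):ℕ):ℝ) * (∑ a, L (2*(j+1)) (q t) a * deriv (fun u => q u a) t) := by
            rw [Finset.sum_sub_distrib, ← Finset.mul_sum, ← Finset.mul_sum]
    have hc4 : (∑ c, dS (fun x => ∑ b, L (2*ℓ) x b * Q x b) c (q t) * deriv (fun u => q u c) t) = -2 * (∑ a, ∑ b, SymJac (L (2*ℓ)) (q t) a b * deriv (fun u => q u a) t * Q (q t) b) := by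
      have hstep : ∀ c : Fin n, dS (fun x => ∑ b, L (2*ℓ) x b * Q x b) c (q t) * deriv (fun u => q u c) t
          = -2 * (∑ b, SymJac (L (2*ℓ)) (q t) c b * deriv (fun u => q u c) t * Q (q t) b) := by
        intro c
        have hz : (∑ b, SymJac (L (2*ℓ)) (q t) c b * Q (q t) b) * deriv (fun u => q u c) t
            = ∑ b, SymJac (L (2*ℓ)) (q t) c b * deriv (fun u => q u c) t * Q (q t) b := by
          rw [Finset.sum_mul]; exact Finset.sum_congr rfl fun b _ => by ring
        rw [htop (q t) c, mul_assoc, hz]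
      calc (∑ c, dS (fun x => ∑ b, L (2*ℓ) x b * Q x b) c (q t) * deriv (fun u => q u c) t)
          = ∑ c, (-2 * (∑ b, SymJac (L (2*ℓ)) (q t) c b * deriv (fun u => q u c) t * Q (q t) b)) :=
            Finset.sum_congr rfl fun c _ => hstep c
        _ = -2 * (∑ a, ∑ b, SymJac (L (2*ℓ)) (q t) a b * deriv (fun u => q u a) t * Q (q t) b) := by rw [← Finset.mul_sum]
    have EA : (∑ j ∈ Finset.range (ℓ+1), (t^(2*j) * (∑ a, ∑ b, SymJac (L (2*j)) (q t) a b * deriv (fun u => q u a) t * deriv (fun u => q u b) t) + t^(2*j+1)/((2*j+1:ℕ):ℝ) * (∑ a, ∑ b, (((∑ c, dS (fun x => SymJac (L (2*j)) x a b) c (q t) * deriv (fun u => q u c) t) * deriv (fun u => q u a) t + SymJac (L (2*j)) (q t) a b * (-(Q (q t) a))) * deriv (fun u => q u b) t + SymJac (L (2*j)) (q t) a b * deriv (fun u => q u a) t * (-(Q (q t) b)))))) = ∑ j ∈ Finset.range (ℓ+1), (t^(2*j) * (∑ a, ∑ b, SymJac (L (2*j)) (q t) a b * deriv (fun u => q u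 a) t * deriv (fun u => q u b) t) + t^(2*j+1)/((2*j+1:ℕ):ℝ) * (-2 * (∑ a, ∑ b, SymJac (L (2*j)) (q t) a b * deriv (fun u => q u a) t * Q (q t) b))) := by
      refine Finset.sum_congr rfl fun j hj => ?_
      have hjl : j ≤ ℓ := by have := Finset.mem_range.mp hj; omega
      rw [hc1 j hjl]
    have EB : (∑ j ∈ Finset.range (ℓ+1), (((2*j:ℕ):ℝ) * t^(2*j-1) * (∑ a, L (2*j) (q t) a * deriv (fun u => q u a) t) + t^(2*j) * (∑ a, ((∑ c, dS (fun x => L (2*j) x a) c (q t) * deriv (fun u => q u c) t) * deriv (fun u => q u a) t + L (2*j) (q t) a * (-(Q (q t) a)))))) = ∑ j ∈ Finset.range (ℓ+1), (((2*j:ℕ):ℝ) * t^(2*j-1) * (∑ a, L (2*j) (q t) a * deriv (fun u => q u a) t) + t^(2*j) * ((∑ a, ∑ b, SymJac (L (2*j)) (q t) a b * deriv (fun u => q u a) t * deriv (fun u => q u b) t) - (∑ a, L (2*j) (q t) a * Q (q t) a))) := by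
      refine Finset.sum_congr rfl fun j hj => ?_
      have hjl : j ≤ ℓ := by have := Finset.mem_range.mp hj; omega
      rw [hc2 j hjl]
    have EC : (∑ j ∈ Finset.range (ℓ+1), (t^(2*j) * (∑ a, L (2*j) (q t) a * Q (q t) a) + t^(2*j+1)/((2*j+1:ℕ):ℝ) * (∑ c, dS (fun x => ∑ b, L (2*j) x b * Q x b) c (q t) * deriv (fun u => q u c) t)))
        = (∑ j ∈ Finset.range ℓ, (t^(2*j) * (∑ a, L (2*j) (q t) a * Q (q t) a) + t^(2*j+1)/((2*j+1:ℕ):ℝ) * (-2 * (∑ a, ∑ b, SymJac (L (2*j)) (q t) a b * deriv (fun u => q u a) t * Q (q t) b) - (((2*j+1)*(2*(j+1)):ℕ):ℝ) * (∑ a, L (2*(j+1)) (q t) a * deriv (fun u => q u a) t)))) + (t^(2*ℓ) * (∑ a, L (2*ℓ) (q t) a * Q (q t) a) + t^(2*ℓ+1)/((2*ℓ+1:ℕ):ℝ) * (-2 * (∑ a, ∑ b, SymJac (L (2*ℓ)) (q t) a b * deriv (fun u => q u a) t * Q (q t) b))) := by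
      rw [Finset.sum_range_succ]
      congr 1
      · refine Finset.sum_congr rfl fun j hj => ?_
        rw [hc3 j (Finset.mem_range.mp hj)]
      · rw [hc4]
    have hzero : (-(∑ j ∈ Finset.range (ℓ+1), (t^(2*j) * (∑ a, ∑ b, SymJac (L (2*j)) (q t) a b * deriv (fun u => q u a) t * deriv (fun u => q u b) t) + t^(2*j+1)/((2*j+1:ℕ):ℝ) * (∑ a, ∑ b, (((∑ c, dS (fun x => SymJac (L (2*j)) x a b) c (q t) * deriv (fun u => q u c) t) * deriv (fun u => q u a) t + SymJac (L (2*j)) (q t) a b * (-(Q (q t) a))) * deriv (fun u => q u b) t + SymJac (L (2*j)) (q t) a b * deriv (fun u => q u a) t * (-(Q (q t) b)))))) + (∑ j ∈ Finset.range (ℓ+1), (((2*j:ℕ):ℝ) * t^(2*j-1) * (∑ a, L (2*j) (q t) a * deriv (fun u => q u a) t) + t^(2*j) * (∑ a, ((∑ c, dS (fun x => L (2*j) x a) c (q t) * deriv (fun u => q u c) t) * deriv (fun u => q u a) t + L (2*j) (q t) a * (-(Q (q t) a)))))) + (∑ j ∈ Finset.range (ℓ+1), (t^(2*j) * (∑ a,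 L (2*j) (q t) a * Q (q t) a) + t^(2*j+1)/((2*j+1:ℕ):ℝ) * (∑ c, dS (fun x => ∑ b, L (2*j) x b * Q x b) c (q t) * deriv (fun u => q u c) t)))) = 0 := by
      rw [EA, EB, EC]
      exact final_algebra ℓ t (fun j => (∑ a, ∑ b, SymJac (L (2*j)) (q t) a b * deriv (fun u => q u a) t * deriv (fun u => q u b) t)) (fun j => (∑ a, ∑ b, SymJac (L (2*j)) (q t) a b * deriv (fun u => q u a) t * Q (q t) b)) (fun j => (∑ a, L (2*j) (q t) a * Q (q t) a)) (fun j => (∑ a, L (2*j) (q t) a * deriv (fun u => q u a) t))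
    rw [hzero] at htot
    exact htot
  have hconst : ∀ t : ℝ, I t = I 0 := fun t =>
    is_const_of_deriv_eq_zero (fun s => (hI s).differentiableAt)
      (fun s => (hI s).deriv) t 0
  exact ⟨I 0, fun t => hconst t⟩
end

section
/- A smooth map C : ℝ³ → Sym_{3×3}(ℝ), written (x,y,z) ↦ (C_{ab}(x,y,z)), is a second-order Killing tensor of the Euclidean space E³ if and only if there exist real constants a₁, a₂, …, a₂₀ such that for all (x,y,z): C₁₁ = (a₆/2)y² + (a₁/2)z² + a₄ yz + a₅ y + a₂ z + a₃; C₁₂ = (a₁₀/2)z² − (a₆/2)xy − (a₄/2)xz − (a₁₄/2)yz − (a₅/2)x − (a₁₅/2)y + a₁₆ z + a₁₇; C₁₃ = (a₁₄/2)y² − (a₄/2)xy − (a₁/2)xz − (a₁₀/2)yz − (a₂/2)x + a₁₈ y − (a₁₁/2)z + a₁₉; C₂₂ = (a₆/2)x² + (a₇/2)z² + a₁₄ xz + a₁₅ x + a₁₂ z + a₁₃; C₂₃ = (a₄/2)x² − (a₁₄/2)xy − (a₁₀/2)xz − (a₇/2)yz − (a₁₆+a₁₈)x − (a₁₂/2)y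 − (a₈/2)z + a₂₀; C₃₃ = (a₁/2)x² + (a₇/2)y² + a₁₀ xy + a₁₁ x + a₈ y + a₉. In particular the space of second-order Killing tensors of E³ is 20-dimensional. -/
open Function
open scoped ContDiff

noncomputable def pd {n : ℕ} (f : (Fin n → ℝ) → ℝ) (a : Fin n) (q : Fin n → ℝ) : ℝ :=
  fderiv ℝ f q (Pi.single a 1)

lemma update_affine {n : ℕ} (q : Fin n → ℝ) (a : Fin n) (s : ℝ) :
    Function.update q a s = q + (s - q a) • (Pi.single a 1 : Fin n → ℝ) := by
  funext b
  rcases eq_or_ne b a with h | h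
  · subst h; simp
  · simp [Function.update_of_ne h, Pi.single_apply, h]

lemma hasDerivAt_line {n : ℕ} (q : Fin n → ℝ) (a : Fin n) (s : ℝ) :
    HasDerivAt (fun s : ℝ => q + (s - q a) • (Pi.single a 1 : Fin n → ℝ)) ((Pi.single a 1 : Fin n → ℝ)) s := by
  have h := (((hasDerivAt_id s).sub_const (q a)).smul_const ((Pi.single a 1 : Fin n → ℝ))).const_add q
  simpa using h

lemma dS_eq_pd {n : ℕ} {f : (Fin n → ℝ) → ℝ} {q : Fin n → ℝ} (a : Fin n)
    (hf : DifferentiableAt ℝ f q) : dS f a q = pd f a q := by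
  have h1 : HasDerivAt (fun s => f (Function.update q a s)) (fderiv ℝ f q (Pi.single a 1)) (q a) := by
    have h2 : HasDerivAt (fun s : ℝ => f (q + (s - q a) • (Pi.single a 1 : Fin n → ℝ)))
        (fderiv ℝ f q (Pi.single a 1)) (q a) := by
      have hf' : HasFDerivAt f (fderiv ℝ f q) (q + (q a - q a) • (Pi.single a 1 : Fin n → ℝ)) := by
        simpa using hf.hasFDerivAt
      exact hf'.comp_hasDerivAt (q a) (hasDerivAt_line q a (q a))
    simpa [update_affine] using h2
  simpa [dS, pd] using h1.deriv

lemma pd_contDiff {n : ℕ} {f : (Fin n → ℝ) → ℝ} (hf : ContDiff ℝ ∞ f) (a : Fin n) :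
    ContDiff ℝ ∞ (pd f a) := by
  have h := (contDiff_infty_iff_fderiv.mp hf).2
  exact h.clm_apply contDiff_const

lemma pd_symm {n : ℕ} {f : (Fin n → ℝ) → ℝ} (hf : ContDiff ℝ ∞ f) (a b : Fin n) (q : Fin n → ℝ) :
    pd (pd f a) b q = pd (pd f b) a q := by
  have hdf : ContDiff ℝ ∞ (fderiv ℝ f) := (contDiff_infty_iff_fderiv.mp hf).2
  have hda : DifferentiableAt ℝ (fderiv ℝ f) q :=
    hdf.differentiable (by simp) q
  have key : ∀ v : Fin n → ℝ, ∀ w : Fin n → ℝ,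
      fderiv ℝ (fun x => fderiv ℝ f x v) q w = fderiv ℝ (fderiv ℝ f) q w v := by
    intro v w
    have h := fderiv_clm_apply (c := fderiv ℝ f) (u := fun _ => v) hda (differentiableAt_const v)
    rw [h]; simp
  have hsymm : IsSymmSndFDerivAt ℝ f q := (hf.contDiffAt).isSymmSndFDerivAt
    (by simp only [minSmoothness_of_isRCLikeNormedField]; exact WithTop.coe_le_coe.mpr le_top)
  have e1 : pd (pd f a) b q = fderiv ℝ (fderiv ℝ f) q (Pi.single b 1) (Pi.single a 1) :=
    key (Pi.single a 1) (Pi.single b 1)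
  have e2 : pd (pd f b) a q = fderiv ℝ (fderiv ℝ f) q (Pi.single a 1) (Pi.single b 1) :=
    key (Pi.single b 1) (Pi.single a 1)
  rw [e1, e2]
  exact (hsymm (Pi.single a 1) (Pi.single b 1)).symm

lemma fderiv_eq_zero_of_pd {n : ℕ} {f : (Fin n → ℝ) → ℝ} {x : Fin n → ℝ}
    (hd : DifferentiableAt ℝ f x) (h : ∀ a, pd f a x = 0) : fderiv ℝ f x = 0 := by
  ext v
  have hv : v = ∑ i, v i • (Pi.single i 1 : Fin n → ℝ) := by
    funext j
    simp [Pi.single_apply]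
  rw [hv]
  simp only [map_sum, map_smul]
  simp [pd] at h
  simp [h]

lemma const_of_pd_zero {n : ℕ} {f : (Fin n → ℝ) → ℝ} (hf : Differentiable ℝ f)
    (h : ∀ q a, pd f a q = 0) (q : Fin n → ℝ) : f q = f 0 :=
  is_const_of_fderiv_eq_zero hf (fun x => fderiv_eq_zero_of_pd (hf x) (h x)) q 0

lemma dS_quad {n : ℕ} (f : (Fin n → ℝ) → ℝ) (c : Fin n) (q : Fin n → ℝ) (α β γ : ℝ)
    (h : ∀ s, f (Function.update q c s) = α * s ^ 2 + β * s + γ) :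
    dS f c q = 2 * α * q c + β := by
  have hfun : (fun s => f (Function.update q c s)) = fun s => α * s ^ 2 + β * s + γ :=
    funext h
  rw [dS, hfun]
  have hd : HasDerivAt (fun s : ℝ => α * s ^ 2 + β * s + γ) (2 * α * q c + β) (q c) := by
    have h1 : HasDerivAt (fun s : ℝ => α * s ^ 2) (α * (2 * q c ^ 1)) (q c) :=
      (hasDerivAt_pow 2 (q c)).const_mul α
    have h2 : HasDerivAt (fun s : ℝ => β * s) (β * 1) (q c) :=
      (hasDerivAt_id (q c)).const_mul β
    have := (h1.fun_add h2).add_const γ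
    refine this.congr_deriv ?_
    ring
  exact hd.deriv

lemma pd_quad {n : ℕ} (f : (Fin n → ℝ) → ℝ) (c : Fin n) (q : Fin n → ℝ) (α β γ : ℝ)
    (hdiff : DifferentiableAt ℝ f q)
    (h : ∀ s, f (Function.update q c s) = α * s ^ 2 + β * s + γ) :
    pd f c q = 2 * α * q c + β := by
  rw [← dS_eq_pd c hdiff]
  exact dS_quad f c q α β γ h

lemma pd_sub_poly {n : ℕ} {f g : (Fin n → ℝ) → ℝ} {q : Fin n → ℝ} (a : Fin n)
    (hf : DifferentiableAt ℝ f q) (hg : DifferentiableAt ℝ g q) :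
    pd (fun x => f x - g x) a q = pd f a q - pd g a q := by
  simp [pd, fderiv_fun_sub hf hg]

lemma one_le_inf : (∞ : WithTop ℕ∞) ≠ 0 := by simp

lemma quad_rep (f : (Fin 3 → ℝ) → ℝ) (hf : ContDiff ℝ ∞ f)
    (h3 : ∀ c d e q, pd (pd (pd f c) d) e q = 0) :
    (∀ c d q, pd (pd f c) d q = pd (pd f c) d 0) ∧
    (∀ c q, pd f c q = pd f c 0 + pd (pd f c) 0 0 * q 0 + pd (pd f c) 1 0 * q 1
        + pd (pd f c) 2 0 * q 2) ∧
    (∀ q : Fin 3 → ℝ, f q = f 0 + pd f 0 0 * q 0 + pd f 1 0 * q 1 + pd f 2 0 * q 2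
      + (1/2) * (pd (pd f 0) 0 0) * q 0 ^ 2 + (1/2) * (pd (pd f 1) 1 0) * q 1 ^ 2
      + (1/2) * (pd (pd f 2) 2 0) * q 2 ^ 2
      + pd (pd f 0) 1 0 * (q 0 * q 1) + pd (pd f 0) 2 0 * (q 0 * q 2)
      + pd (pd f 1) 2 0 * (q 1 * q 2)) := by
  have hfc : ∀ c, ContDiff ℝ ∞ (pd f c) := fun c => pd_contDiff hf c
  have hfcd : ∀ c d, ContDiff ℝ ∞ (pd (pd f c) d) := fun c d => pd_contDiff (hfc c) d
  have hMconst : ∀ c d q, pd (pd f c) d q = pd (pd f c) d 0 := by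
    intro c d q
    exact const_of_pd_zero ((hfcd c d).differentiable one_le_inf)
      (fun x e => h3 c d e x) q
  refine ⟨hMconst, ?_⟩
  set M : Fin 3 → Fin 3 → ℝ := fun c d => pd (pd f c) d 0 with hM
  have grad : ∀ c q, pd f c q = pd f c 0 + M c 0 * q 0 + M c 1 * q 1 + M c 2 * q 2 := by
    intro c q
    set P : (Fin 3 → ℝ) → ℝ := fun x => M c 0 * x 0 + M c 1 * x 1 + M c 2 * x 2 with hP
    have hPdiff : Differentiable ℝ P := by simp only [hP]; fun_prop
    have hfcdiff : Differentiable ℝ (pd f c) := (hfc c).differentiable one_le_inf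
    have hzero : ∀ x e, pd (fun y => pd f c y - P y) e x = 0 := by
      intro x e
      rw [pd_sub_poly e (hfcdiff x) (hPdiff x)]
      have hPe : pd P e x = M c e := by
        fin_cases e
        · have h := pd_quad P 0 x 0 (M c 0) (M c 1 * x 1 + M c 2 * x 2) (hPdiff x)
            (fun s => by simp [hP, Function.update_apply]; ring)
          simpa using h
        · have h := pd_quad P 1 x 0 (M c 1) (M c 0 * x 0 + M c 2 * x 2) (hPdiff x)
            (fun s => by simp [hP, Function.update_apply]; ring)
          simpa using h
        · have h := pd_quad P 2 x 0 (M c 2) (M c 0 * x 0 + M c 1 * x 1) (hPdiff x)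
            (fun s => by simp [hP, Function.update_apply]; ring)
          simpa using h
      rw [hPe, hMconst c e x]
      ring
    have hconst := const_of_pd_zero (hfcdiff.sub hPdiff) hzero q
    have hP0 : P 0 = 0 := by simp [hP]
    have hPq : P q = M c 0 * q 0 + M c 1 * q 1 + M c 2 * q 2 := rfl
    rw [Pi.sub_apply, Pi.sub_apply, hP0] at hconst
    linarith [hconst]
  refine ⟨fun c q => grad c q, ?_⟩
  intro q
  have hfdiff : Differentiable ℝ f := hf.differentiable one_le_inf
  have hMsym : ∀ a b, M a b = M b a := fun a b => pd_symm hf a b 0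
  set Q : (Fin 3 → ℝ) → ℝ := fun x => pd f 0 0 * x 0 + pd f 1 0 * x 1 + pd f 2 0 * x 2
      + (1/2) * M 0 0 * x 0 ^ 2 + (1/2) * M 1 1 * x 1 ^ 2 + (1/2) * M 2 2 * x 2 ^ 2
      + M 0 1 * (x 0 * x 1) + M 0 2 * (x 0 * x 2) + M 1 2 * (x 1 * x 2) with hQ
  have hQdiff : Differentiable ℝ Q := by simp only [hQ]; fun_prop
  have hzero : ∀ x e, pd (fun y => f y - Q y) e x = 0 := by
    intro x e
    rw [pd_sub_poly e (hfdiff x) (hQdiff x)]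
    have hQe : pd Q e x = pd f e 0 + M e 0 * x 0 + M e 1 * x 1 + M e 2 * x 2 := by
      fin_cases e
      · show pd Q 0 x = pd f 0 0 + M 0 0 * x 0 + M 0 1 * x 1 + M 0 2 * x 2
        have h := pd_quad Q 0 x ((1/2) * M 0 0)
          (pd f 0 0 + M 0 1 * x 1 + M 0 2 * x 2)
          (pd f 1 0 * x 1 + pd f 2 0 * x 2 + (1/2) * M 1 1 * x 1 ^ 2
            + (1/2) * M 2 2 * x 2 ^ 2 + M 1 2 * (x 1 * x 2)) (hQdiff x)
          (fun s => by simp [hQ, Function.update_apply]; ring)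
        rw [h]; ring
      · show pd Q 1 x = pd f 1 0 + M 1 0 * x 0 + M 1 1 * x 1 + M 1 2 * x 2
        have h := pd_quad Q 1 x ((1/2) * M 1 1)
          (pd f 1 0 + M 0 1 * x 0 + M 1 2 * x 2)
          (pd f 0 0 * x 0 + pd f 2 0 * x 2 + (1/2) * M 0 0 * x 0 ^ 2
            + (1/2) * M 2 2 * x 2 ^ 2 + M 0 2 * (x 0 * x 2)) (hQdiff x)
          (fun s => by simp [hQ, Function.update_apply]; ring)
        rw [h, hMsym 1 0]; ring
      · show pd Q 2 x = pd f 2 0 + M 2 0 * x 0 + M 2 1 * x 1 + M 2 2 * x 2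
        have h := pd_quad Q 2 x ((1/2) * M 2 2)
          (pd f 2 0 + M 0 2 * x 0 + M 1 2 * x 1)
          (pd f 0 0 * x 0 + pd f 1 0 * x 1 + (1/2) * M 0 0 * x 0 ^ 2
            + (1/2) * M 1 1 * x 1 ^ 2 + M 0 1 * (x 0 * x 1)) (hQdiff x)
          (fun s => by simp [hQ, Function.update_apply]; ring)
        rw [h, hMsym 2 0, hMsym 2 1]; ring
    rw [hQe, grad e x]
    ring
  have hconst := const_of_pd_zero (hfdiff.sub hQdiff) hzero q
  have hQ0 : Q 0 = 0 := by simp [hQ]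
  rw [Pi.sub_apply, Pi.sub_apply, hQ0] at hconst
  have hQq : Q q = pd f 0 0 * q 0 + pd f 1 0 * q 1 + pd f 2 0 * q 2
      + (1/2) * pd (pd f 0) 0 0 * q 0 ^ 2 + (1/2) * pd (pd f 1) 1 0 * q 1 ^ 2
      + (1/2) * pd (pd f 2) 2 0 * q 2 ^ 2
      + pd (pd f 0) 1 0 * (q 0 * q 1) + pd (pd f 0) 2 0 * (q 0 * q 2)
      + pd (pd f 1) 2 0 * (q 1 * q 2) := rfl
  rw [hQq] at hconst
  linarith [hconst]

lemma third_vanish {ι : Type*} (W : ι → ι → ι → ι → ι → ℝ)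
    (h12 : ∀ a b c d e, W a b c d e = W b a c d e)
    (h34 : ∀ a b c d e, W a b c d e = W a b d c e)
    (h45 : ∀ a b c d e, W a b c d e = W a b c e d)
    (hcyc : ∀ a b c d e, W a b c d e + W b c a d e + W c a b d e = 0)
    (a b c d e : ι) : W a b c d e = 0 := by
  linear_combination ((1/6 : ℝ)) * hcyc a b c d e +
    ((1/2 : ℝ)) * h34 a b c d e +
    ((1/3 : ℝ)) * h45 a b c d e +
    ((1/6 : ℝ)) * hcyc a b c e d +
    ((1/6 : ℝ)) * h34 a b c e d +
    ((1/6 : ℝ)) * hcyc a b d c e +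
    ((1/3 : ℝ)) * h45 a b d c e +
    ((1/6 : ℝ)) * hcyc a b d e c +
    ((1/6 : ℝ)) * h34 a b d e c +
    ((1/6 : ℝ)) * hcyc a b e c d +
    ((1/6 : ℝ)) * hcyc a b e d c +
    ((1/6 : ℝ)) * h12 a c b d e +
    ((-1/2 : ℝ)) * h34 a c b d e +
    ((1/3 : ℝ)) * h45 a c b d e +
    ((1/6 : ℝ)) * h12 a c b e d +
    ((1/6 : ℝ)) * h34 a c b e d +
    ((1/6 : ℝ)) * hcyc a c d b e +
    ((-2/3 : ℝ)) * h45 a c d b e +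
    ((-1/3 : ℝ)) * hcyc a c d e b +
    ((-1/3 : ℝ)) * h34 a c d e b +
    ((1/6 : ℝ)) * hcyc a c e b d +
    ((-1/3 : ℝ)) * hcyc a c e d b +
    ((1/6 : ℝ)) * h12 a d b c e +
    ((-1/2 : ℝ)) * h34 a d b c e +
    ((1/3 : ℝ)) * h45 a d b c e +
    ((1/6 : ℝ)) * h12 a d b e c +
    ((1/6 : ℝ)) * h34 a d b e c +
    ((1/6 : ℝ)) * h12 a d c b e +
    ((-2/3 : ℝ)) * h45 a d c b e +
    ((-1/3 : ℝ)) * h12 a d c e b +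
    ((-1/3 : ℝ)) * h34 a d c e b +
    ((1/6 : ℝ)) * hcyc a d e b c +
    ((-1/3 : ℝ)) * hcyc a d e c b +
    ((1/6 : ℝ)) * h12 a e b c d +
    ((-1/2 : ℝ)) * h34 a e b c d +
    ((1/3 : ℝ)) * h45 a e b c d +
    ((1/6 : ℝ)) * h12 a e b d c +
    ((1/6 : ℝ)) * h34 a e b d c +
    ((1/6 : ℝ)) * h12 a e c b d +
    ((-2/3 : ℝ)) * h45 a e c b d +
    ((-1/3 : ℝ)) * h12 a e c d b +
    ((-1/3 : ℝ)) * h34 a e c d b +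
    ((1/6 : ℝ)) * h12 a e d b c +
    ((-1/3 : ℝ)) * h12 a e d c b +
    ((-1/6 : ℝ)) * h34 b c a d e +
    ((-1/6 : ℝ)) * h34 b c a e d +
    ((-1/6 : ℝ)) * hcyc b c d a e +
    ((-1/6 : ℝ)) * hcyc b c e a d +
    ((-1/6 : ℝ)) * h34 b d a c e +
    ((-1/6 : ℝ)) * h34 b d a e c +
    ((-1/6 : ℝ)) * h12 b d c a e +
    ((-1/6 : ℝ)) * hcyc b d e a c +
    ((-1/6 : ℝ)) * h34 b e a c d +
    ((-1/6 : ℝ)) * h34 b e a d c +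
    ((-1/6 : ℝ)) * h12 b e c a d +
    ((-1/6 : ℝ)) * h12 b e d a c +
    ((-1/6 : ℝ)) * h34 c d a b e +
    ((1/3 : ℝ)) * h34 c d a e b +
    ((1/3 : ℝ)) * hcyc c d e a b +
    ((-1/6 : ℝ)) * h34 c e a b d +
    ((1/3 : ℝ)) * h34 c e a d b +
    ((1/3 : ℝ)) * h12 c e d a b +
    ((-1/6 : ℝ)) * h34 d e a b c +
    ((1/3 : ℝ)) * h34 d e a c b

lemma pd_add3 {n : ℕ} {u v w : (Fin n → ℝ) → ℝ} (d : Fin n) {q : Fin n → ℝ}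
    (hu : DifferentiableAt ℝ u q) (hv : DifferentiableAt ℝ v q)
    (hw : DifferentiableAt ℝ w q) :
    pd (fun x => u x + v x + w x) d q = pd u d q + pd v d q + pd w d q := by
  simp only [pd]
  rw [fderiv_fun_add (f := fun x => u x + v x) (hu.add hv) hw, fderiv_fun_add hu hv]
  simp

/-- Characterization of the second-order Killing tensors of the Euclidean space
`E³`: they form the 20-parameter family below. Coordinates: `x = q 0`,
`y = q 1`, `z = q 2`. -/
theorem killing_tensors_of_E3
    (C : (Fin 3 → ℝ) → Fin 3 → Fin 3 → ℝ)
    (hsm : ∀ a b, ContDiff ℝ (⊤ : ℕ∞) (fun q => C q a b))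
    (hsym : ∀ q a b, C q a b = C q b a) :
    IsKillingTensor C ↔
      ∃ a₁ a₂ a₃ a₄ a₅ a₆ a₇ a₈ a₉ a₁₀ a₁₁ a₁₂ a₁₃ a₁₄ a₁₅ a₁₆ a₁₇ a₁₈ a₁₉ a₂₀ : ℝ,
      ∀ q : Fin 3 → ℝ,
        C q 0 0 = (a₆ / 2) * (q 1) ^ 2 + (a₁ / 2) * (q 2) ^ 2 + a₄ * q 1 * q 2
          + a₅ * q 1 + a₂ * q 2 + a₃ ∧
        C q 0 1 = (a₁₀ / 2) * (q 2) ^ 2 - (a₆ / 2) * q 0 * q 1 - (a₄ / 2) * q 0 * q 2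
          - (a₁₄ / 2) * q 1 * q 2 - (a₅ / 2) * q 0 - (a₁₅ / 2) * q 1 + a₁₆ * q 2 + a₁₇ ∧
        C q 0 2 = (a₁₄ / 2) * (q 1) ^ 2 - (a₄ / 2) * q 0 * q 1 - (a₁ / 2) * q 0 * q 2
          - (a₁₀ / 2) * q 1 * q 2 - (a₂ / 2) * q 0 + a₁₈ * q 1 - (a₁₁ / 2) * q 2 + a₁₉ ∧
        C q 1 1 = (a₆ / 2) * (q 0) ^ 2 + (a₇ / 2) * (q 2) ^ 2 + a₁₄ * q 0 * q 2
          + a₁₅ * q 0 + a₁₂ * q 2 + a₁₃ ∧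
        C q 1 2 = (a₄ / 2) * (q 0) ^ 2 - (a₁₄ / 2) * q 0 * q 1 - (a₁₀ / 2) * q 0 * q 2
          - (a₇ / 2) * q 1 * q 2 - (a₁₆ + a₁₈) * q 0 - (a₁₂ / 2) * q 1
          - (a₈ / 2) * q 2 + a₂₀ ∧
        C q 2 2 = (a₁ / 2) * (q 0) ^ 2 + (a₇ / 2) * (q 1) ^ 2 + a₁₀ * q 0 * q 1
          + a₁₁ * q 0 + a₈ * q 1 + a₉ := by
  constructor
  · rintro ⟨-, -, hK⟩
    have hsm' : ∀ a b : Fin 3, ContDiff ℝ ∞ (fun x => C x a b) := fun a b => (hsm a b).of_le (by simp)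
    have hdiff : ∀ (a b : Fin 3) (q : Fin 3 → ℝ), DifferentiableAt ℝ (fun x => C x a b) q :=
      fun a b q => ((hsm' a b).differentiable one_le_inf) q
    have hK1 : ∀ (q : Fin 3 → ℝ) (a b c : Fin 3),
        pd (fun x => C x a b) c q + pd (fun x => C x b c) a q + pd (fun x => C x c a) b q = 0 := by
      intro q a b c
      have h := hK q a b c
      rwa [dS_eq_pd c (hdiff a b q), dS_eq_pd a (hdiff b c q), dS_eq_pd b (hdiff c a q)] at h
    have hK2 : ∀ (q : Fin 3 → ℝ) (a b c d : Fin 3),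
        pd (pd (fun x => C x a b) c) d q + pd (pd (fun x => C x b c) a) d q
          + pd (pd (fun x => C x c a) b) d q = 0 := by
      intro q a b c d
      have hzero : (fun y => pd (fun x => C x a b) c y + pd (fun x => C x b c) a y
          + pd (fun x => C x c a) b y) = (fun _ => (0:ℝ)) := funext (fun y => hK1 y a b c)
      have h0 : pd (fun y => pd (fun x => C x a b) c y + pd (fun x => C x b c) a y
          + pd (fun x => C x c a) b y) d q = 0 := by
        rw [hzero]; simp [pd, fderiv_const]
      have hsum := pd_add3 (u := pd (fun x => C x a b) c) (v := pd (fun x => C x b c) a)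
        (w := pd (fun x => C x c a) b) d
        (((pd_contDiff (hsm' a b) c).differentiable one_le_inf) q)
        (((pd_contDiff (hsm' b c) a).differentiable one_le_inf) q)
        (((pd_contDiff (hsm' c a) b).differentiable one_le_inf) q)
      rw [← hsum]; exact h0
    have hK3 : ∀ (q : Fin 3 → ℝ) (a b c d e : Fin 3),
        pd (pd (pd (fun x => C x a b) c) d) e q + pd (pd (pd (fun x => C x b c) a) d) e q
          + pd (pd (pd (fun x => C x c a) b) d) e q = 0 := by
      intro q a b c d e
      have hzero : (fun y => pd (pd (fun x => C x a b) c) d y + pd (pd (fun x => C x b c) a) d y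
          + pd (pd (fun x => C x c a) b) d y) = (fun _ => (0:ℝ)) := funext (fun y => hK2 y a b c d)
      have h0 : pd (fun y => pd (pd (fun x => C x a b) c) d y + pd (pd (fun x => C x b c) a) d y
          + pd (pd (fun x => C x c a) b) d y) e q = 0 := by
        rw [hzero]; simp [pd, fderiv_const]
      have hsum := pd_add3 (u := pd (pd (fun x => C x a b) c) d) (v := pd (pd (fun x => C x b c) a) d)
        (w := pd (pd (fun x => C x c a) b) d) e
        (((pd_contDiff (pd_contDiff (hsm' a b) c) d).differentiable one_le_inf) q)
        (((pd_contDiff (pd_contDiff (hsm' b c) a) d).differentiable one_le_inf) q)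
        (((pd_contDiff (pd_contDiff (hsm' c a) b) d).differentiable one_le_inf) q)
      rw [← hsum]; exact h0
    have h3 : ∀ (a b c d e : Fin 3) (q : Fin 3 → ℝ),
        pd (pd (pd (fun x => C x a b) c) d) e q = 0 := by
      intro a b c d e q
      refine third_vanish (fun a b c d e => pd (pd (pd (fun x => C x a b) c) d) e q)
        ?_ ?_ ?_ ?_ a b c d e
      · intro a b c d e
        show pd (pd (pd (fun x => C x a b) c) d) e q = pd (pd (pd (fun x => C x b a) c) d) e q
        rw [show (fun x => C x a b) = (fun x => C x b a) from funext (fun x => hsym x a b)]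
      · intro a b c d e
        show pd (pd (pd (fun x => C x a b) c) d) e q = pd (pd (pd (fun x => C x a b) d) c) e q
        rw [show pd (pd (fun x => C x a b) c) d = pd (pd (fun x => C x a b) d) c from
          funext (pd_symm (hsm' a b) c d)]
      · intro a b c d e
        exact pd_symm (pd_contDiff (hsm' a b) c) d e q
      · intro a b c d e
        exact hK3 q a b c d e
    have hLc : ∀ a b c : Fin 3, pd (fun x => C x a b) c 0 + pd (fun x => C x b c) a 0
        + pd (fun x => C x c a) b 0 = 0 := fun a b c => hK1 0 a b c
    have hLs : ∀ a b c : Fin 3, pd (fun x => C x a b) c 0 = pd (fun x => C x b a) c 0 := by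
      intro a b c
      rw [show (fun x => C x a b) = (fun x => C x b a) from funext (fun x => hsym x a b)]
    have hMc : ∀ a b c d : Fin 3, pd (pd (fun x => C x a b) c) d 0
        + pd (pd (fun x => C x b c) a) d 0 + pd (pd (fun x => C x c a) b) d 0 = 0 :=
      fun a b c d => hK2 0 a b c d
    have hMs1 : ∀ a b c d : Fin 3, pd (pd (fun x => C x a b) c) d 0
        = pd (pd (fun x => C x b a) c) d 0 := by
      intro a b c d
      rw [show (fun x => C x a b) = (fun x => C x b a) from funext (fun x => hsym x a b)]
    have hMs2 : ∀ a b c d : Fin 3, pd (pd (fun x => C x a b) c) d 0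
        = pd (pd (fun x => C x a b) d) c 0 := fun a b c d => pd_symm (hsm' a b) c d 0
    have g00_x2 : pd (pd (fun x => C x 0 0) 0) 0 0 = 0 := by
      linear_combination ((1/3 : ℝ)) * hMc 0 0 0 0
    have g00_xy : pd (pd (fun x => C x 0 0) 0) 1 0 = 0 := by
      linear_combination ((1/3 : ℝ)) * hMc 0 0 0 1
    have g00_xz : pd (pd (fun x => C x 0 0) 0) 2 0 = 0 := by
      linear_combination ((1/3 : ℝ)) * hMc 0 0 0 2
    have g00_x : pd (fun x => C x 0 0) 0 0 = 0 := by
      linear_combination ((1/3 : ℝ)) * hLc 0 0 0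
    have g01_z2 : pd (pd (fun x => C x 0 1) 2) 2 0 - pd (pd (fun x => C x 2 2) 0) 1 0 = 0 := by
      linear_combination (1) * hMc 0 1 2 2 + (1) * hMs1 0 2 1 2 + (-1) * hMs2 0 2 1 2 + ((-1/2 : ℝ)) * hMs1 0 2 2 1 + ((-1/2 : ℝ)) * hMc 0 2 2 1 + (-1) * hMs2 1 2 0 2 + ((-1/2 : ℝ)) * hMs1 1 2 2 0 + ((-1/2 : ℝ)) * hMc 1 2 2 0 + ((-1/2 : ℝ)) * hMs2 2 2 0 1
    have g01_xy : pd (pd (fun x => C x 0 1) 0) 1 0 + (1/2 : ℝ) * pd (pd (fun x => C x 0 0) 1) 1 0 = 0 := by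
      linear_combination ((1/2 : ℝ)) * hMc 0 0 1 1 + ((1/2 : ℝ)) * hMs1 0 1 0 1
    have g01_xz : pd (pd (fun x => C x 0 1) 0) 2 0 + (1/2 : ℝ) * pd (pd (fun x => C x 0 0) 1) 2 0 = 0 := by
      linear_combination ((1/2 : ℝ)) * hMc 0 0 1 2 + ((1/2 : ℝ)) * hMs1 0 1 0 2
    have g01_yz : pd (pd (fun x => C x 0 1) 1) 2 0 + (1/2 : ℝ) * pd (pd (fun x => C x 1 1) 0) 2 0 = 0 := by
      linear_combination ((1/2 : ℝ)) * hMs1 0 1 1 2 + ((1/2 : ℝ)) * hMc 0 1 1 2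
    have g01_x2 : pd (pd (fun x => C x 0 1) 0) 0 0 = 0 := by
      linear_combination ((1/2 : ℝ)) * hMs2 0 0 0 1 + ((-1/6 : ℝ)) * hMc 0 0 0 1 + ((1/2 : ℝ)) * hMc 0 0 1 0 + ((1/2 : ℝ)) * hMs1 0 1 0 0
    have g01_y2 : pd (pd (fun x => C x 0 1) 1) 1 0 = 0 := by
      linear_combination ((1/2 : ℝ)) * hMs1 0 1 1 1 + ((1/2 : ℝ)) * hMc 0 1 1 1 + ((-1/2 : ℝ)) * hMs2 1 1 0 1 + ((-1/6 : ℝ)) * hMc 1 1 1 0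
    have g01_x : pd (fun x => C x 0 1) 0 0 + (1/2 : ℝ) * pd (fun x => C x 0 0) 1 0 = 0 := by
      linear_combination ((1/2 : ℝ)) * hLc 0 0 1 + ((1/2 : ℝ)) * hLs 0 1 0
    have g01_y : pd (fun x => C x 0 1) 1 0 + (1/2 : ℝ) * pd (fun x => C x 1 1) 0 0 = 0 := by
      linear_combination ((1/2 : ℝ)) * hLs 0 1 1 + ((1/2 : ℝ)) * hLc 0 1 1
    have g02_y2 : pd (pd (fun x => C x 0 2) 1) 1 0 - pd (pd (fun x => C x 1 1) 0) 2 0 = 0 := by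
      linear_combination ((-1/2 : ℝ)) * hMs1 0 1 1 2 + (1) * hMs2 0 1 1 2 + ((-1/2 : ℝ)) * hMc 0 1 1 2 + (1) * hMc 0 1 2 1 + (1) * hMs1 0 2 1 1 + ((-1/2 : ℝ)) * hMs2 1 1 0 2 + ((-1/2 : ℝ)) * hMc 1 1 2 0 + (-1) * hMs2 1 2 0 1 + ((-1/2 : ℝ)) * hMs1 1 2 1 0
    have g02_xy : pd (pd (fun x => C x 0 2) 0) 1 0 + (1/2 : ℝ) * pd (pd (fun x => C x 0 0) 1) 2 0 = 0 := by
      linear_combination ((1/2 : ℝ)) * hMs2 0 0 1 2 + ((1/2 : ℝ)) * hMc 0 0 2 1 + ((1/2 : ℝ)) * hMs1 0 2 0 1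
    have g02_xz : pd (pd (fun x => C x 0 2) 0) 2 0 + (1/2 : ℝ) * pd (pd (fun x => C x 0 0) 2) 2 0 = 0 := by
      linear_combination ((1/2 : ℝ)) * hMc 0 0 2 2 + ((1/2 : ℝ)) * hMs1 0 2 0 2
    have g02_yz : pd (pd (fun x => C x 0 2) 1) 2 0 + (1/2 : ℝ) * pd (pd (fun x => C x 2 2) 0) 1 0 = 0 := by
      linear_combination (1) * hMs2 0 2 1 2 + ((1/2 : ℝ)) * hMs1 0 2 2 1 + ((1/2 : ℝ)) * hMc 0 2 2 1
    have g02_x2 : pd (pd (fun x => C x 0 2) 0) 0 0 = 0 := by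
      linear_combination ((1/2 : ℝ)) * hMs2 0 0 0 2 + ((-1/6 : ℝ)) * hMc 0 0 0 2 + ((1/2 : ℝ)) * hMc 0 0 2 0 + ((1/2 : ℝ)) * hMs1 0 2 0 0
    have g02_z2 : pd (pd (fun x => C x 0 2) 2) 2 0 = 0 := by
      linear_combination ((1/2 : ℝ)) * hMs1 0 2 2 2 + ((1/2 : ℝ)) * hMc 0 2 2 2 + ((-1/2 : ℝ)) * hMs2 2 2 0 2 + ((-1/6 : ℝ)) * hMc 2 2 2 0
    have g02_x : pd (fun x => C x 0 2) 0 0 + (1/2 : ℝ) * pd (fun x => C x 0 0) 2 0 = 0 := by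
      linear_combination ((1/2 : ℝ)) * hLc 0 0 2 + ((1/2 : ℝ)) * hLs 0 2 0
    have g02_z : pd (fun x => C x 0 2) 2 0 + (1/2 : ℝ) * pd (fun x => C x 2 2) 0 0 = 0 := by
      linear_combination ((1/2 : ℝ)) * hLs 0 2 2 + ((1/2 : ℝ)) * hLc 0 2 2
    have g11_x2 : pd (pd (fun x => C x 1 1) 0) 0 0 - pd (pd (fun x => C x 0 0) 1) 1 0 = 0 := by
      linear_combination (-1) * hMc 0 0 1 1 + (-1) * hMs1 0 1 0 1 + (2) * hMs2 0 1 0 1 + (1) * hMs1 0 1 1 0 + (1) * hMc 0 1 1 0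
    have g11_xy : pd (pd (fun x => C x 1 1) 0) 1 0 = 0 := by
      linear_combination (1) * hMs2 1 1 0 1 + ((1/3 : ℝ)) * hMc 1 1 1 0
    have g11_y2 : pd (pd (fun x => C x 1 1) 1) 1 0 = 0 := by
      linear_combination ((1/3 : ℝ)) * hMc 1 1 1 1
    have g11_yz : pd (pd (fun x => C x 1 1) 1) 2 0 = 0 := by
      linear_combination ((1/3 : ℝ)) * hMc 1 1 1 2
    have g11_y : pd (fun x => C x 1 1) 1 0 = 0 := by
      linear_combination ((1/3 : ℝ)) * hLc 1 1 1
    have g12_x2 : pd (pd (fun x => C x 1 2) 0) 0 0 - pd (pd (fun x => C x 0 0) 1) 2 0 = 0 := by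
      linear_combination ((-1/2 : ℝ)) * hMs2 0 0 1 2 + ((-1/2 : ℝ)) * hMc 0 0 1 2 + ((-1/2 : ℝ)) * hMc 0 0 2 1 + ((-1/2 : ℝ)) * hMs1 0 1 0 2 + (1) * hMs2 0 1 0 2 + (1) * hMc 0 1 2 0 + ((-1/2 : ℝ)) * hMs1 0 2 0 1 + (1) * hMs2 0 2 0 1 + (1) * hMs1 0 2 1 0
    have g12_xy : pd (pd (fun x => C x 1 2) 0) 1 0 + (1/2 : ℝ) * pd (pd (fun x => C x 1 1) 0) 2 0 = 0 := by
      linear_combination ((1/2 : ℝ)) * hMs2 1 1 0 2 + ((1/2 : ℝ)) * hMc 1 1 2 0 + (1) * hMs2 1 2 0 1 + ((1/2 : ℝ)) * hMs1 1 2 1 0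
    have g12_xz : pd (pd (fun x => C x 1 2) 0) 2 0 + (1/2 : ℝ) * pd (pd (fun x => C x 2 2) 0) 1 0 = 0 := by
      linear_combination (1) * hMs2 1 2 0 2 + ((1/2 : ℝ)) * hMs1 1 2 2 0 + ((1/2 : ℝ)) * hMc 1 2 2 0 + ((1/2 : ℝ)) * hMs2 2 2 0 1
    have g12_yz : pd (pd (fun x => C x 1 2) 1) 2 0 + (1/2 : ℝ) * pd (pd (fun x => C x 1 1) 2) 2 0 = 0 := by
      linear_combination ((1/2 : ℝ)) * hMc 1 1 2 2 + ((1/2 : ℝ)) * hMs1 1 2 1 2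
    have g12_y2 : pd (pd (fun x => C x 1 2) 1) 1 0 = 0 := by
      linear_combination ((1/2 : ℝ)) * hMs2 1 1 1 2 + ((-1/6 : ℝ)) * hMc 1 1 1 2 + ((1/2 : ℝ)) * hMc 1 1 2 1 + ((1/2 : ℝ)) * hMs1 1 2 1 1
    have g12_z2 : pd (pd (fun x => C x 1 2) 2) 2 0 = 0 := by
      linear_combination ((1/2 : ℝ)) * hMs1 1 2 2 2 + ((1/2 : ℝ)) * hMc 1 2 2 2 + ((-1/2 : ℝ)) * hMs2 2 2 1 2 + ((-1/6 : ℝ)) * hMc 2 2 2 1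
    have g12_x : pd (fun x => C x 1 2) 0 0 + pd (fun x => C x 0 1) 2 0 + pd (fun x => C x 0 2) 1 0 = 0 := by
      linear_combination (1) * hLc 0 1 2 + (1) * hLs 0 2 1
    have g12_y : pd (fun x => C x 1 2) 1 0 + (1/2 : ℝ) * pd (fun x => C x 1 1) 2 0 = 0 := by
      linear_combination ((1/2 : ℝ)) * hLc 1 1 2 + ((1/2 : ℝ)) * hLs 1 2 1
    have g12_z : pd (fun x => C x 1 2) 2 0 + (1/2 : ℝ) * pd (fun x => C x 2 2) 1 0 = 0 := by
      linear_combination ((1/2 : ℝ)) * hLs 1 2 2 + ((1/2 : ℝ)) * hLc 1 2 2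
    have g22_x2 : pd (pd (fun x => C x 2 2) 0) 0 0 - pd (pd (fun x => C x 0 0) 2) 2 0 = 0 := by
      linear_combination (-1) * hMc 0 0 2 2 + (-1) * hMs1 0 2 0 2 + (2) * hMs2 0 2 0 2 + (1) * hMs1 0 2 2 0 + (1) * hMc 0 2 2 0
    have g22_y2 : pd (pd (fun x => C x 2 2) 1) 1 0 - pd (pd (fun x => C x 1 1) 2) 2 0 = 0 := by
      linear_combination (-1) * hMc 1 1 2 2 + (-1) * hMs1 1 2 1 2 + (2) * hMs2 1 2 1 2 + (1) * hMs1 1 2 2 1 + (1) * hMc 1 2 2 1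
    have g22_xz : pd (pd (fun x => C x 2 2) 0) 2 0 = 0 := by
      linear_combination (1) * hMs2 2 2 0 2 + ((1/3 : ℝ)) * hMc 2 2 2 0
    have g22_yz : pd (pd (fun x => C x 2 2) 1) 2 0 = 0 := by
      linear_combination (1) * hMs2 2 2 1 2 + ((1/3 : ℝ)) * hMc 2 2 2 1
    have g22_z2 : pd (pd (fun x => C x 2 2) 2) 2 0 = 0 := by
      linear_combination ((1/3 : ℝ)) * hMc 2 2 2 2
    have g22_z : pd (fun x => C x 2 2) 2 0 = 0 := by
      linear_combination ((1/3 : ℝ)) * hLc 2 2 2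
    have hrep00 : ∀ q : Fin 3 → ℝ, C q 0 0 = C 0 0 0 + pd (fun x => C x 0 0) 0 0 * q 0 + pd (fun x => C x 0 0) 1 0 * q 1 + pd (fun x => C x 0 0) 2 0 * q 2
        + (1/2) * (pd (pd (fun x => C x 0 0) 0) 0 0) * q 0 ^ 2 + (1/2) * (pd (pd (fun x => C x 0 0) 1) 1 0) * q 1 ^ 2
        + (1/2) * (pd (pd (fun x => C x 0 0) 2) 2 0) * q 2 ^ 2
        + pd (pd (fun x => C x 0 0) 0) 1 0 * (q 0 * q 1) + pd (pd (fun x => C x 0 0) 0) 2 0 * (q 0 * q 2)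
        + pd (pd (fun x => C x 0 0) 1) 2 0 * (q 1 * q 2) :=
      (quad_rep (fun x => C x 0 0) (hsm' 0 0) (fun c d e q => h3 0 0 c d e q)).2.2
    have hrep01 : ∀ q : Fin 3 → ℝ, C q 0 1 = C 0 0 1 + pd (fun x => C x 0 1) 0 0 * q 0 + pd (fun x => C x 0 1) 1 0 * q 1 + pd (fun x => C x 0 1) 2 0 * q 2
        + (1/2) * (pd (pd (fun x => C x 0 1) 0) 0 0) * q 0 ^ 2 + (1/2) * (pd (pd (fun x => C x 0 1) 1) 1 0) * q 1 ^ 2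
        + (1/2) * (pd (pd (fun x => C x 0 1) 2) 2 0) * q 2 ^ 2
        + pd (pd (fun x => C x 0 1) 0) 1 0 * (q 0 * q 1) + pd (pd (fun x => C x 0 1) 0) 2 0 * (q 0 * q 2)
        + pd (pd (fun x => C x 0 1) 1) 2 0 * (q 1 * q 2) :=
      (quad_rep (fun x => C x 0 1) (hsm' 0 1) (fun c d e q => h3 0 1 c d e q)).2.2
    have hrep02 : ∀ q : Fin 3 → ℝ, C q 0 2 = C 0 0 2 + pd (fun x => C x 0 2) 0 0 * q 0 + pd (fun x => C x 0 2) 1 0 * q 1 + pd (fun x => C x 0 2) 2 0 * q 2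
        + (1/2) * (pd (pd (fun x => C x 0 2) 0) 0 0) * q 0 ^ 2 + (1/2) * (pd (pd (fun x => C x 0 2) 1) 1 0) * q 1 ^ 2
        + (1/2) * (pd (pd (fun x => C x 0 2) 2) 2 0) * q 2 ^ 2
        + pd (pd (fun x => C x 0 2) 0) 1 0 * (q 0 * q 1) + pd (pd (fun x => C x 0 2) 0) 2 0 * (q 0 * q 2)
        + pd (pd (fun x => C x 0 2) 1) 2 0 * (q 1 * q 2) :=
      (quad_rep (fun x => C x 0 2) (hsm' 0 2) (fun c d e q => h3 0 2 c d e q)).2.2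
    have hrep11 : ∀ q : Fin 3 → ℝ, C q 1 1 = C 0 1 1 + pd (fun x => C x 1 1) 0 0 * q 0 + pd (fun x => C x 1 1) 1 0 * q 1 + pd (fun x => C x 1 1) 2 0 * q 2
        + (1/2) * (pd (pd (fun x => C x 1 1) 0) 0 0) * q 0 ^ 2 + (1/2) * (pd (pd (fun x => C x 1 1) 1) 1 0) * q 1 ^ 2
        + (1/2) * (pd (pd (fun x => C x 1 1) 2) 2 0) * q 2 ^ 2
        + pd (pd (fun x => C x 1 1) 0) 1 0 * (q 0 * q 1) + pd (pd (fun x => C x 1 1) 0) 2 0 * (q 0 * q 2)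
        + pd (pd (fun x => C x 1 1) 1) 2 0 * (q 1 * q 2) :=
      (quad_rep (fun x => C x 1 1) (hsm' 1 1) (fun c d e q => h3 1 1 c d e q)).2.2
    have hrep12 : ∀ q : Fin 3 → ℝ, C q 1 2 = C 0 1 2 + pd (fun x => C x 1 2) 0 0 * q 0 + pd (fun x => C x 1 2) 1 0 * q 1 + pd (fun x => C x 1 2) 2 0 * q 2
        + (1/2) * (pd (pd (fun x => C x 1 2) 0) 0 0) * q 0 ^ 2 + (1/2) * (pd (pd (fun x => C x 1 2) 1) 1 0) * q 1 ^ 2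
        + (1/2) * (pd (pd (fun x => C x 1 2) 2) 2 0) * q 2 ^ 2
        + pd (pd (fun x => C x 1 2) 0) 1 0 * (q 0 * q 1) + pd (pd (fun x => C x 1 2) 0) 2 0 * (q 0 * q 2)
        + pd (pd (fun x => C x 1 2) 1) 2 0 * (q 1 * q 2) :=
      (quad_rep (fun x => C x 1 2) (hsm' 1 2) (fun c d e q => h3 1 2 c d e q)).2.2
    have hrep22 : ∀ q : Fin 3 → ℝ, C q 2 2 = C 0 2 2 + pd (fun x => C x 2 2) 0 0 * q 0 + pd (fun x => C x 2 2) 1 0 * q 1 + pd (fun x => C x 2 2) 2 0 * q 2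
        + (1/2) * (pd (pd (fun x => C x 2 2) 0) 0 0) * q 0 ^ 2 + (1/2) * (pd (pd (fun x => C x 2 2) 1) 1 0) * q 1 ^ 2
        + (1/2) * (pd (pd (fun x => C x 2 2) 2) 2 0) * q 2 ^ 2
        + pd (pd (fun x => C x 2 2) 0) 1 0 * (q 0 * q 1) + pd (pd (fun x => C x 2 2) 0) 2 0 * (q 0 * q 2)
        + pd (pd (fun x => C x 2 2) 1) 2 0 * (q 1 * q 2) :=
      (quad_rep (fun x => C x 2 2) (hsm' 2 2) (fun c d e q => h3 2 2 c d e q)).2.2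
    refine ⟨pd (pd (fun x => C x 0 0) 2) 2 0, pd (fun x => C x 0 0) 2 0, C 0 0 0, pd (pd (fun x => C x 0 0) 1) 2 0, pd (fun x => C x 0 0) 1 0, pd (pd (fun x => C x 0 0) 1) 1 0, pd (pd (fun x => C x 1 1) 2) 2 0, pd (fun x => C x 2 2) 1 0, C 0 2 2, pd (pd (fun x => C x 2 2) 0) 1 0, pd (fun x => C x 2 2) 0 0, pd (fun x => C x 1 1) 2 0, C 0 1 1, pd (pd (fun x => C x 1 1) 0) 2 0, pd (fun x => C x 1 1) 0 0, pd (fun x => C x 0 1) 2 0, C 0 0 1, pd (fun x => C x 0 2) 1 0, C 0 0 2, C 0 1 2, fun q => ?_⟩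
    refine ⟨?_, ?_, ?_, ?_, ?_, ?_⟩
    · linear_combination hrep00 q + (q 0) * g00_x + (q 0 ^ 2 / 2) * g00_x2 + (q 0 * q 1) * g00_xy + (q 0 * q 2) * g00_xz
    · linear_combination hrep01 q + (q 0) * g01_x + (q 1) * g01_y + (q 0 ^ 2 / 2) * g01_x2 + (q 1 ^ 2 / 2) * g01_y2 + (q 2 ^ 2 / 2) * g01_z2 + (q 0 * q 1) * g01_xy + (q 0 * q 2) * g01_xz + (q 1 * q 2) * g01_yz
    · linear_combination hrep02 q + (q 0) * g02_x + (q 2) * g02_z + (q 0 ^ 2 / 2) * g02_x2 + (q 1 ^ 2 / 2) * g02_y2 + (q 2 ^ 2 / 2) * g02_z2 + (q 0 * q 1) * g02_xy + (q 0 * q 2) * g02_xz + (q 1 * q 2) * g02_yz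
    · linear_combination hrep11 q + (q 1) * g11_y + (q 0 ^ 2 / 2) * g11_x2 + (q 1 ^ 2 / 2) * g11_y2 + (q 0 * q 1) * g11_xy + (q 1 * q 2) * g11_yz
    · linear_combination hrep12 q + (q 0) * g12_x + (q 1) * g12_y + (q 2) * g12_z + (q 0 ^ 2 / 2) * g12_x2 + (q 1 ^ 2 / 2) * g12_y2 + (q 2 ^ 2 / 2) * g12_z2 + (q 0 * q 1) * g12_xy + (q 0 * q 2) * g12_xz + (q 1 * q 2) * g12_yz
    · linear_combination hrep22 q + (q 2) * g22_z + (q 0 ^ 2 / 2) * g22_x2 + (q 1 ^ 2 / 2) * g22_y2 + (q 2 ^ 2 / 2) * g22_z2 + (q 0 * q 2) * g22_xz + (q 1 * q 2) * g22_yz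
  · rintro ⟨a₁, a₂, a₃, a₄, a₅, a₆, a₇, a₈, a₉, a₁₀, a₁₁, a₁₂, a₁₃, a₁₄, a₁₅, a₁₆, a₁₇, a₁₈, a₁₉, a₂₀, h⟩
    refine ⟨hsm, hsym, ?_⟩
    intro q a b c
    have h00 : (fun x : Fin 3 → ℝ => C x 0 0) = (fun x : Fin 3 → ℝ => (a₆ / 2) * (x 1) ^ 2 + (a₁ / 2) * (x 2) ^ 2 + a₄ * x 1 * x 2 + a₅ * x 1 + a₂ * x 2 + a₃) :=
      funext fun x => (h x).1
    have h01 : (fun x : Fin 3 → ℝ => C x 0 1) = (fun x : Fin 3 → ℝ => (a₁₀ / 2) * (x 2) ^ 2 - (a₆ / 2) * x 0 * x 1 - (a₄ / 2) * x 0 * x 2 - (a₁₄ / 2) * x 1 * x 2 - (a₅ / 2) * x 0 - (a₁₅ / 2) * x 1 + a₁₆ * x 2 + a₁₇) :=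
      funext fun x => (h x).2.1
    have h10 : (fun x : Fin 3 → ℝ => C x 1 0) = (fun x : Fin 3 → ℝ => (a₁₀ / 2) * (x 2) ^ 2 - (a₆ / 2) * x 0 * x 1 - (a₄ / 2) * x 0 * x 2 - (a₁₄ / 2) * x 1 * x 2 - (a₅ / 2) * x 0 - (a₁₅ / 2) * x 1 + a₁₆ * x 2 + a₁₇) :=
      funext fun x => (hsym x 1 0).trans ((h x).2.1)
    have h02 : (fun x : Fin 3 → ℝ => C x 0 2) = (fun x : Fin 3 → ℝ => (a₁₄ / 2) * (x 1) ^ 2 - (a₄ / 2) * x 0 * x 1 - (a₁ / 2) * x 0 * x 2 - (a₁₀ / 2) * x 1 * x 2 - (a₂ / 2) * x 0 + a₁₈ * x 1 - (a₁₁ / 2) * x 2 + a₁₉) :=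
      funext fun x => (h x).2.2.1
    have h20 : (fun x : Fin 3 → ℝ => C x 2 0) = (fun x : Fin 3 → ℝ => (a₁₄ / 2) * (x 1) ^ 2 - (a₄ / 2) * x 0 * x 1 - (a₁ / 2) * x 0 * x 2 - (a₁₀ / 2) * x 1 * x 2 - (a₂ / 2) * x 0 + a₁₈ * x 1 - (a₁₁ / 2) * x 2 + a₁₉) :=
      funext fun x => (hsym x 2 0).trans ((h x).2.2.1)
    have h11 : (fun x : Fin 3 → ℝ => C x 1 1) = (fun x : Fin 3 → ℝ => (a₆ / 2) * (x 0) ^ 2 + (a₇ / 2) * (x 2) ^ 2 + a₁₄ * x 0 * x 2 + a₁₅ * x 0 + a₁₂ * x 2 + a₁₃) :=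
      funext fun x => (h x).2.2.2.1
    have h12 : (fun x : Fin 3 → ℝ => C x 1 2) = (fun x : Fin 3 → ℝ => (a₄ / 2) * (x 0) ^ 2 - (a₁₄ / 2) * x 0 * x 1 - (a₁₀ / 2) * x 0 * x 2 - (a₇ / 2) * x 1 * x 2 - (a₁₆ + a₁₈) * x 0 - (a₁₂ / 2) * x 1 - (a₈ / 2) * x 2 + a₂₀) :=
      funext fun x => (h x).2.2.2.2.1
    have h21 : (fun x : Fin 3 → ℝ => C x 2 1) = (fun x : Fin 3 → ℝ => (a₄ / 2) * (x 0) ^ 2 - (a₁₄ / 2) * x 0 * x 1 - (a₁₀ / 2) * x 0 * x 2 - (a₇ / 2) * x 1 * x 2 - (a₁₆ + a₁₈) * x 0 - (a₁₂ / 2) * x 1 - (a₈ / 2) * x 2 + a₂₀) :=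
      funext fun x => (hsym x 2 1).trans ((h x).2.2.2.2.1)
    have h22 : (fun x : Fin 3 → ℝ => C x 2 2) = (fun x : Fin 3 → ℝ => (a₁ / 2) * (x 0) ^ 2 + (a₇ / 2) * (x 1) ^ 2 + a₁₀ * x 0 * x 1 + a₁₁ * x 0 + a₈ * x 1 + a₉) :=
      funext fun x => (h x).2.2.2.2.2
    have d00_0 : dS (fun x : Fin 3 → ℝ => (a₆ / 2) * (x 1) ^ 2 + (a₁ / 2) * (x 2) ^ 2 + a₄ * x 1 * x 2 + a₅ * x 1 + a₂ * x 2 + a₃) 0 q = 2 * (0) * q 0 + (0) :=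
      dS_quad _ 0 q (0) (0) ((a₆/2) * q 1^2 + (a₁/2) * q 2^2 + a₄ * q 1 * q 2 + a₅ * q 1 + a₂ * q 2 + a₃) (fun s => by simp [Function.update_apply]; try ring)
    have d00_1 : dS (fun x : Fin 3 → ℝ => (a₆ / 2) * (x 1) ^ 2 + (a₁ / 2) * (x 2) ^ 2 + a₄ * x 1 * x 2 + a₅ * x 1 + a₂ * x 2 + a₃) 1 q = 2 * ((a₆/2)) * q 1 + (a₄ * q 2 + a₅) :=
      dS_quad _ 1 q ((a₆/2)) (a₄ * q 2 + a₅) ((a₁/2) * q 2^2 + a₂ * q 2 + a₃) (fun s => by simp [Function.update_apply]; try ring)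
    have d00_2 : dS (fun x : Fin 3 → ℝ => (a₆ / 2) * (x 1) ^ 2 + (a₁ / 2) * (x 2) ^ 2 + a₄ * x 1 * x 2 + a₅ * x 1 + a₂ * x 2 + a₃) 2 q = 2 * ((a₁/2)) * q 2 + (a₄ * q 1 + a₂) :=
      dS_quad _ 2 q ((a₁/2)) (a₄ * q 1 + a₂) ((a₆/2) * q 1^2 + a₅ * q 1 + a₃) (fun s => by simp [Function.update_apply]; try ring)
    have d01_0 : dS (fun x : Fin 3 → ℝ => (a₁₀ / 2) * (x 2) ^ 2 - (a₆ / 2) * x 0 * x 1 - (a₄ / 2) * x 0 * x 2 - (a₁₄ / 2) * x 1 * x 2 - (a₅ / 2) * x 0 - (a₁₅ / 2) * x 1 + a₁₆ * x 2 + a₁₇) 0 q = 2 * (0) * q 0 + ((-(a₆/2)) * q 1 + (-(a₄/2)) * q 2 + (-(a₅/2))) :=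
      dS_quad _ 0 q (0) ((-(a₆/2)) * q 1 + (-(a₄/2)) * q 2 + (-(a₅/2))) ((a₁₀/2) * q 2^2 + (-(a₁₄/2)) * q 1 * q 2 + (-(a₁₅/2)) * q 1 + a₁₆ * q 2 + a₁₇) (fun s => by simp [Function.update_apply]; try ring)
    have d01_1 : dS (fun x : Fin 3 → ℝ => (a₁₀ / 2) * (x 2) ^ 2 - (a₆ / 2) * x 0 * x 1 - (a₄ / 2) * x 0 * x 2 - (a₁₄ / 2) * x 1 * x 2 - (a₅ / 2) * x 0 - (a₁₅ / 2) * x 1 + a₁₆ * x 2 + a₁₇) 1 q = 2 * (0) * q 1 + ((-(a₆/2)) * q 0 + (-(a₁₄/2)) * q 2 + (-(a₁₅/2))) :=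
      dS_quad _ 1 q (0) ((-(a₆/2)) * q 0 + (-(a₁₄/2)) * q 2 + (-(a₁₅/2))) ((a₁₀/2) * q 2^2 + (-(a₄/2)) * q 0 * q 2 + (-(a₅/2)) * q 0 + a₁₆ * q 2 + a₁₇) (fun s => by simp [Function.update_apply]; try ring)
    have d01_2 : dS (fun x : Fin 3 → ℝ => (a₁₀ / 2) * (x 2) ^ 2 - (a₆ / 2) * x 0 * x 1 - (a₄ / 2) * x 0 * x 2 - (a₁₄ / 2) * x 1 * x 2 - (a₅ / 2) * x 0 - (a₁₅ / 2) * x 1 + a₁₆ * x 2 + a₁₇) 2 q = 2 * ((a₁₀/2)) * q 2 + ((-(a₄/2)) * q 0 + (-(a₁₄/2)) * q 1 + a₁₆) :=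
      dS_quad _ 2 q ((a₁₀/2)) ((-(a₄/2)) * q 0 + (-(a₁₄/2)) * q 1 + a₁₆) ((-(a₆/2)) * q 0 * q 1 + (-(a₅/2)) * q 0 + (-(a₁₅/2)) * q 1 + a₁₇) (fun s => by simp [Function.update_apply]; try ring)
    have d02_0 : dS (fun x : Fin 3 → ℝ => (a₁₄ / 2) * (x 1) ^ 2 - (a₄ / 2) * x 0 * x 1 - (a₁ / 2) * x 0 * x 2 - (a₁₀ / 2) * x 1 * x 2 - (a₂ / 2) * x 0 + a₁₈ * x 1 - (a₁₁ / 2) * x 2 + a₁₉) 0 q = 2 * (0) * q 0 + ((-(a₄/2)) * q 1 + (-(a₁/2)) * q 2 + (-(a₂/2))) :=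
      dS_quad _ 0 q (0) ((-(a₄/2)) * q 1 + (-(a₁/2)) * q 2 + (-(a₂/2))) ((a₁₄/2) * q 1^2 + (-(a₁₀/2)) * q 1 * q 2 + a₁₈ * q 1 + (-(a₁₁/2)) * q 2 + a₁₉) (fun s => by simp [Function.update_apply]; try ring)
    have d02_1 : dS (fun x : Fin 3 → ℝ => (a₁₄ / 2) * (x 1) ^ 2 - (a₄ / 2) * x 0 * x 1 - (a₁ / 2) * x 0 * x 2 - (a₁₀ / 2) * x 1 * x 2 - (a₂ / 2) * x 0 + a₁₈ * x 1 - (a₁₁ / 2) * x 2 + a₁₉) 1 q = 2 * ((a₁₄/2)) * q 1 + ((-(a₄/2)) * q 0 + (-(a₁₀/2)) * q 2 + a₁₈) :=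
      dS_quad _ 1 q ((a₁₄/2)) ((-(a₄/2)) * q 0 + (-(a₁₀/2)) * q 2 + a₁₈) ((-(a₁/2)) * q 0 * q 2 + (-(a₂/2)) * q 0 + (-(a₁₁/2)) * q 2 + a₁₉) (fun s => by simp [Function.update_apply]; try ring)
    have d02_2 : dS (fun x : Fin 3 → ℝ => (a₁₄ / 2) * (x 1) ^ 2 - (a₄ / 2) * x 0 * x 1 - (a₁ / 2) * x 0 * x 2 - (a₁₀ / 2) * x 1 * x 2 - (a₂ / 2) * x 0 + a₁₈ * x 1 - (a₁₁ / 2) * x 2 + a₁₉) 2 q = 2 * (0) * q 2 + ((-(a₁/2)) * q 0 + (-(a₁₀/2)) * q 1 + (-(a₁₁/2))) :=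
      dS_quad _ 2 q (0) ((-(a₁/2)) * q 0 + (-(a₁₀/2)) * q 1 + (-(a₁₁/2))) ((a₁₄/2) * q 1^2 + (-(a₄/2)) * q 0 * q 1 + (-(a₂/2)) * q 0 + a₁₈ * q 1 + a₁₉) (fun s => by simp [Function.update_apply]; try ring)
    have d11_0 : dS (fun x : Fin 3 → ℝ => (a₆ / 2) * (x 0) ^ 2 + (a₇ / 2) * (x 2) ^ 2 + a₁₄ * x 0 * x 2 + a₁₅ * x 0 + a₁₂ * x 2 + a₁₃) 0 q = 2 * ((a₆/2)) * q 0 + (a₁₄ * q 2 + a₁₅) :=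
      dS_quad _ 0 q ((a₆/2)) (a₁₄ * q 2 + a₁₅) ((a₇/2) * q 2^2 + a₁₂ * q 2 + a₁₃) (fun s => by simp [Function.update_apply]; try ring)
    have d11_1 : dS (fun x : Fin 3 → ℝ => (a₆ / 2) * (x 0) ^ 2 + (a₇ / 2) * (x 2) ^ 2 + a₁₄ * x 0 * x 2 + a₁₅ * x 0 + a₁₂ * x 2 + a₁₃) 1 q = 2 * (0) * q 1 + (0) :=
      dS_quad _ 1 q (0) (0) ((a₆/2) * q 0^2 + (a₇/2) * q 2^2 + a₁₄ * q 0 * q 2 + a₁₅ * q 0 + a₁₂ * q 2 + a₁₃) (fun s => by simp [Function.update_apply]; try ring)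
    have d11_2 : dS (fun x : Fin 3 → ℝ => (a₆ / 2) * (x 0) ^ 2 + (a₇ / 2) * (x 2) ^ 2 + a₁₄ * x 0 * x 2 + a₁₅ * x 0 + a₁₂ * x 2 + a₁₃) 2 q = 2 * ((a₇/2)) * q 2 + (a₁₄ * q 0 + a₁₂) :=
      dS_quad _ 2 q ((a₇/2)) (a₁₄ * q 0 + a₁₂) ((a₆/2) * q 0^2 + a₁₅ * q 0 + a₁₃) (fun s => by simp [Function.update_apply]; try ring)
    have d12_0 : dS (fun x : Fin 3 → ℝ => (a₄ / 2) * (x 0) ^ 2 - (a₁₄ / 2) * x 0 * x 1 - (a₁₀ / 2) * x 0 * x 2 - (a₇ / 2) * x 1 * x 2 - (a₁₆ + a₁₈) * x 0 - (a₁₂ / 2) * x 1 - (a₈ / 2) * x 2 + a₂₀) 0 q = 2 * ((a₄/2)) * q 0 + ((-(a₁₄/2)) * q 1 + (-(a₁₀/2)) * q 2 + (-(a₁₆+a₁₈))) :=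
      dS_quad _ 0 q ((a₄/2)) ((-(a₁₄/2)) * q 1 + (-(a₁₀/2)) * q 2 + (-(a₁₆+a₁₈))) ((-(a₇/2)) * q 1 * q 2 + (-(a₁₂/2)) * q 1 + (-(a₈/2)) * q 2 + a₂₀) (fun s => by simp [Function.update_apply]; try ring)
    have d12_1 : dS (fun x : Fin 3 → ℝ => (a₄ / 2) * (x 0) ^ 2 - (a₁₄ / 2) * x 0 * x 1 - (a₁₀ / 2) * x 0 * x 2 - (a₇ / 2) * x 1 * x 2 - (a₁₆ + a₁₈) * x 0 - (a₁₂ / 2) * x 1 - (a₈ / 2) * x 2 + a₂₀) 1 q = 2 * (0) * q 1 + ((-(a₁₄/2)) * q 0 + (-(a₇/2)) * q 2 + (-(a₁₂/2))) :=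
      dS_quad _ 1 q (0) ((-(a₁₄/2)) * q 0 + (-(a₇/2)) * q 2 + (-(a₁₂/2))) ((a₄/2) * q 0^2 + (-(a₁₀/2)) * q 0 * q 2 + (-(a₁₆+a₁₈)) * q 0 + (-(a₈/2)) * q 2 + a₂₀) (fun s => by simp [Function.update_apply]; try ring)
    have d12_2 : dS (fun x : Fin 3 → ℝ => (a₄ / 2) * (x 0) ^ 2 - (a₁₄ / 2) * x 0 * x 1 - (a₁₀ / 2) * x 0 * x 2 - (a₇ / 2) * x 1 * x 2 - (a₁₆ + a₁₈) * x 0 - (a₁₂ / 2) * x 1 - (a₈ / 2) * x 2 + a₂₀) 2 q = 2 * (0) * q 2 + ((-(a₁₀/2)) * q 0 + (-(a₇/2)) * q 1 + (-(a₈/2))) :=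
      dS_quad _ 2 q (0) ((-(a₁₀/2)) * q 0 + (-(a₇/2)) * q 1 + (-(a₈/2))) ((a₄/2) * q 0^2 + (-(a₁₄/2)) * q 0 * q 1 + (-(a₁₆+a₁₈)) * q 0 + (-(a₁₂/2)) * q 1 + a₂₀) (fun s => by simp [Function.update_apply]; try ring)
    have d22_0 : dS (fun x : Fin 3 → ℝ => (a₁ / 2) * (x 0) ^ 2 + (a₇ / 2) * (x 1) ^ 2 + a₁₀ * x 0 * x 1 + a₁₁ * x 0 + a₈ * x 1 + a₉) 0 q = 2 * ((a₁/2)) * q 0 + (a₁₀ * q 1 + a₁₁) :=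
      dS_quad _ 0 q ((a₁/2)) (a₁₀ * q 1 + a₁₁) ((a₇/2) * q 1^2 + a₈ * q 1 + a₉) (fun s => by simp [Function.update_apply]; try ring)
    have d22_1 : dS (fun x : Fin 3 → ℝ => (a₁ / 2) * (x 0) ^ 2 + (a₇ / 2) * (x 1) ^ 2 + a₁₀ * x 0 * x 1 + a₁₁ * x 0 + a₈ * x 1 + a₉) 1 q = 2 * ((a₇/2)) * q 1 + (a₁₀ * q 0 + a₈) :=
      dS_quad _ 1 q ((a₇/2)) (a₁₀ * q 0 + a₈) ((a₁/2) * q 0^2 + a₁₁ * q 0 + a₉) (fun s => by simp [Function.update_apply]; try ring)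
    have d22_2 : dS (fun x : Fin 3 → ℝ => (a₁ / 2) * (x 0) ^ 2 + (a₇ / 2) * (x 1) ^ 2 + a₁₀ * x 0 * x 1 + a₁₁ * x 0 + a₈ * x 1 + a₉) 2 q = 2 * (0) * q 2 + (0) :=
      dS_quad _ 2 q (0) (0) ((a₁/2) * q 0^2 + (a₇/2) * q 1^2 + a₁₀ * q 0 * q 1 + a₁₁ * q 0 + a₈ * q 1 + a₉) (fun s => by simp [Function.update_apply]; try ring)
    fin_cases a <;> fin_cases b <;> fin_cases c
    · show dS (fun x => C x 0 0) 0 q + dS (fun x => C x 0 0) 0 q + dS (fun x => C x 0 0) 0 q = 0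
      rw [h00, d00_0]
      ring
    · show dS (fun x => C x 0 0) 1 q + dS (fun x => C x 0 1) 0 q + dS (fun x => C x 1 0) 0 q = 0
      rw [h00, h01, h10, d00_1, d01_0]
      ring
    · show dS (fun x => C x 0 0) 2 q + dS (fun x => C x 0 2) 0 q + dS (fun x => C x 2 0) 0 q = 0
      rw [h00, h02, h20, d00_2, d02_0]
      ring
    · show dS (fun x => C x 0 1) 0 q + dS (fun x => C x 1 0) 0 q + dS (fun x => C x 0 0) 1 q = 0
      rw [h01, h10, h00, d01_0, d00_1]
      ring
    · show dS (fun x => C x 0 1) 1 q + dS (fun x => C x 1 1) 0 q + dS (fun x => C x 1 0) 1 q = 0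
      rw [h01, h11, h10, d01_1, d11_0]
      ring
    · show dS (fun x => C x 0 1) 2 q + dS (fun x => C x 1 2) 0 q + dS (fun x => C x 2 0) 1 q = 0
      rw [h01, h12, h20, d01_2, d12_0, d02_1]
      ring
    · show dS (fun x => C x 0 2) 0 q + dS (fun x => C x 2 0) 0 q + dS (fun x => C x 0 0) 2 q = 0
      rw [h02, h20, h00, d02_0, d00_2]
      ring
    · show dS (fun x => C x 0 2) 1 q + dS (fun x => C x 2 1) 0 q + dS (fun x => C x 1 0) 2 q = 0
      rw [h02, h21, h10, d02_1, d12_0, d01_2]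
      ring
    · show dS (fun x => C x 0 2) 2 q + dS (fun x => C x 2 2) 0 q + dS (fun x => C x 2 0) 2 q = 0
      rw [h02, h22, h20, d02_2, d22_0]
      ring
    · show dS (fun x => C x 1 0) 0 q + dS (fun x => C x 0 0) 1 q + dS (fun x => C x 0 1) 0 q = 0
      rw [h10, h00, h01, d01_0, d00_1]
      ring
    · show dS (fun x => C x 1 0) 1 q + dS (fun x => C x 0 1) 1 q + dS (fun x => C x 1 1) 0 q = 0
      rw [h10, h01, h11, d01_1, d11_0]
      ring
    · show dS (fun x => C x 1 0) 2 q + dS (fun x => C x 0 2) 1 q + dS (fun x => C x 2 1) 0 q = 0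
      rw [h10, h02, h21, d01_2, d02_1, d12_0]
      ring
    · show dS (fun x => C x 1 1) 0 q + dS (fun x => C x 1 0) 1 q + dS (fun x => C x 0 1) 1 q = 0
      rw [h11, h10, h01, d11_0, d01_1]
      ring
    · show dS (fun x => C x 1 1) 1 q + dS (fun x => C x 1 1) 1 q + dS (fun x => C x 1 1) 1 q = 0
      rw [h11, d11_1]
      ring
    · show dS (fun x => C x 1 1) 2 q + dS (fun x => C x 1 2) 1 q + dS (fun x => C x 2 1) 1 q = 0
      rw [h11, h12, h21, d11_2, d12_1]
      ring
    · show dS (fun x => C x 1 2) 0 q + dS (fun x => C x 2 0) 1 q + dS (fun x => C x 0 1) 2 q = 0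
      rw [h12, h20, h01, d12_0, d02_1, d01_2]
      ring
    · show dS (fun x => C x 1 2) 1 q + dS (fun x => C x 2 1) 1 q + dS (fun x => C x 1 1) 2 q = 0
      rw [h12, h21, h11, d12_1, d11_2]
      ring
    · show dS (fun x => C x 1 2) 2 q + dS (fun x => C x 2 2) 1 q + dS (fun x => C x 2 1) 2 q = 0
      rw [h12, h22, h21, d12_2, d22_1]
      ring
    · show dS (fun x => C x 2 0) 0 q + dS (fun x => C x 0 0) 2 q + dS (fun x => C x 0 2) 0 q = 0
      rw [h20, h00, h02, d02_0, d00_2]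
      ring
    · show dS (fun x => C x 2 0) 1 q + dS (fun x => C x 0 1) 2 q + dS (fun x => C x 1 2) 0 q = 0
      rw [h20, h01, h12, d02_1, d01_2, d12_0]
      ring
    · show dS (fun x => C x 2 0) 2 q + dS (fun x => C x 0 2) 2 q + dS (fun x => C x 2 2) 0 q = 0
      rw [h20, h02, h22, d02_2, d22_0]
      ring
    · show dS (fun x => C x 2 1) 0 q + dS (fun x => C x 1 0) 2 q + dS (fun x => C x 0 2) 1 q = 0
      rw [h21, h10, h02, d12_0, d01_2, d02_1]
      ring
    · show dS (fun x => C x 2 1) 1 q + dS (fun x => C x 1 1) 2 q + dS (fun x => C x 1 2) 1 q = 0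
      rw [h21, h11, h12, d12_1, d11_2]
      ring
    · show dS (fun x => C x 2 1) 2 q + dS (fun x => C x 1 2) 2 q + dS (fun x => C x 2 2) 1 q = 0
      rw [h21, h12, h22, d12_2, d22_1]
      ring
    · show dS (fun x => C x 2 2) 0 q + dS (fun x => C x 2 0) 2 q + dS (fun x => C x 0 2) 2 q = 0
      rw [h22, h20, h02, d22_0, d02_2]
      ring
    · show dS (fun x => C x 2 2) 1 q + dS (fun x => C x 2 1) 2 q + dS (fun x => C x 1 2) 2 q = 0
      rw [h22, h21, h12, d22_1, d12_2]
      ring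
    · show dS (fun x => C x 2 2) 2 q + dS (fun x => C x 2 2) 2 q + dS (fun x => C x 2 2) 2 q = 0
      rw [h22, d22_2]
      ring
end

section
/- Let x, y, z : ℝ → ℝ be smooth with z(t) ≠ 0 for all t, satisfying the geodesic equations ẍ = −(2/z) ẋ ż, ÿ = −(2/z) ẏ ż, z̈ = z(ẋ² + ẏ²) for all t. Then each of the following functions of t is constant: (1) z² ẋ; (2) z² ẏ; (3) z²(x ẏ − y ẋ); (4) the kinetic energy T = ½(z² ẋ² + z² ẏ² + ż²); (5) −t T + (z ż)/2; (6) −t² T + t z ż − z²/2. -/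
/-- First integrals of the geodesic equations of the metric
`ds² = z²(dx² + dy²) + dz²`. -/
theorem geodesic_first_integrals
    (x y z : ℝ → ℝ)
    (hx : ContDiff ℝ (⊤ : ℕ∞) x) (hy : ContDiff ℝ (⊤ : ℕ∞) y) (hz : ContDiff ℝ (⊤ : ℕ∞) z)
    (hzne : ∀ t, z t ≠ 0)
    -- the geodesic equations
    (hgx : ∀ t, deriv (deriv x) t = -(2 / z t) * deriv x t * deriv z t)
    (hgy : ∀ t, deriv (deriv y) t = -(2 / z t) * deriv y t * deriv z t)
    (hgz : ∀ t, deriv (deriv z) t = z t * ((deriv x t) ^ 2 + (deriv y t) ^ 2)) :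
    -- (1) `z² ẋ` is constant
    (∃ c : ℝ, ∀ t, (z t) ^ 2 * deriv x t = c) ∧
    -- (2) `z² ẏ` is constant
    (∃ c : ℝ, ∀ t, (z t) ^ 2 * deriv y t = c) ∧
    -- (3) `z²(x ẏ − y ẋ)` is constant
    (∃ c : ℝ, ∀ t, (z t) ^ 2 * (x t * deriv y t - y t * deriv x t) = c) ∧
    -- (4) the kinetic energy `T = ½(z² ẋ² + z² ẏ² + ż²)` is constant
    (∃ c : ℝ, ∀ t,
      (1 / 2) * ((z t) ^ 2 * (deriv x t) ^ 2 + (z t) ^ 2 * (deriv y t) ^ 2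
        + (deriv z t) ^ 2) = c) ∧
    -- (5) `−t T + z ż / 2` is constant
    (∃ c : ℝ, ∀ t,
      -t * ((1 / 2) * ((z t) ^ 2 * (deriv x t) ^ 2 + (z t) ^ 2 * (deriv y t) ^ 2
        + (deriv z t) ^ 2)) + z t * deriv z t / 2 = c) ∧
    -- (6) `−t² T + t z ż − z²/2` is constant
    (∃ c : ℝ, ∀ t,
      -t ^ 2 * ((1 / 2) * ((z t) ^ 2 * (deriv x t) ^ 2 + (z t) ^ 2 * (deriv y t) ^ 2
        + (deriv z t) ^ 2)) + t * z t * deriv z t - (z t) ^ 2 / 2 = c) := by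
  have key : ∀ (F : ℝ → ℝ), (∀ t, HasDerivAt F 0 t) → ∃ c : ℝ, ∀ t, F t = c := by
    intro F h
    exact ⟨F 0, fun t => is_const_of_deriv_eq_zero
      (fun s => (h s).differentiableAt) (fun s => (h s).deriv) t 0⟩
  have hdx : ∀ t, HasDerivAt x (deriv x t) t :=
    fun t => (hx.differentiable (by simp) t).hasDerivAt
  have hdy : ∀ t, HasDerivAt y (deriv y t) t :=
    fun t => (hy.differentiable (by simp) t).hasDerivAt
  have hdz : ∀ t, HasDerivAt z (deriv z t) t :=
    fun t => (hz.differentiable (by simp) t).hasDerivAt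
  have hdx2 : ∀ t, HasDerivAt (deriv x) (deriv (deriv x) t) t :=
    fun t => ((contDiff_infty_iff_deriv.mp (hx.of_le (by simp))).2.differentiable (by simp) t).hasDerivAt
  have hdy2 : ∀ t, HasDerivAt (deriv y) (deriv (deriv y) t) t :=
    fun t => ((contDiff_infty_iff_deriv.mp (hy.of_le (by simp))).2.differentiable (by simp) t).hasDerivAt
  have hdz2 : ∀ t, HasDerivAt (deriv z) (deriv (deriv z) t) t :=
    fun t => ((contDiff_infty_iff_deriv.mp (hz.of_le (by simp))).2.differentiable (by simp) t).hasDerivAt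
  have h1 : ∀ t, HasDerivAt (fun t => (z t) ^ 2 * deriv x t) 0 t := by
    intro t
    have h := ((hdz t).pow 2).mul (hdx2 t)
    refine h.congr_deriv (Eq.symm ?_)
    simp only [Pi.pow_apply, Pi.mul_apply, Pi.sub_apply, Pi.neg_apply, id_eq]
    have hzt := hzne t
    rw [hgx t]; field_simp; ring
  have h2 : ∀ t, HasDerivAt (fun t => (z t) ^ 2 * deriv y t) 0 t := by
    intro t
    have h := ((hdz t).pow 2).mul (hdy2 t)
    refine h.congr_deriv (Eq.symm ?_)
    simp only [Pi.pow_apply, Pi.mul_apply, Pi.sub_apply, Pi.neg_apply, id_eq]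
    have hzt := hzne t
    rw [hgy t]; field_simp; ring
  have h3 : ∀ t, HasDerivAt
      (fun t => (z t) ^ 2 * (x t * deriv y t - y t * deriv x t)) 0 t := by
    intro t
    have h := ((hdz t).pow 2).mul (((hdx t).mul (hdy2 t)).sub ((hdy t).mul (hdx2 t)))
    refine h.congr_deriv (Eq.symm ?_)
    simp only [Pi.pow_apply, Pi.mul_apply, Pi.sub_apply, Pi.neg_apply, id_eq]
    have hzt := hzne t
    rw [hgx t, hgy t]; field_simp; ring
  have h4 : ∀ t, HasDerivAt
      (fun t => (1 / 2) * ((z t) ^ 2 * (deriv x t) ^ 2 + (z t) ^ 2 * (deriv y t) ^ 2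
        + (deriv z t) ^ 2)) 0 t := by
    intro t
    have h := (((((hdz t).pow 2).mul ((hdx2 t).pow 2)).add
        (((hdz t).pow 2).mul ((hdy2 t).pow 2))).add ((hdz2 t).pow 2)).const_mul (1/2 : ℝ)
    refine h.congr_deriv (Eq.symm ?_)
    simp only [Pi.pow_apply, Pi.mul_apply, Pi.sub_apply, Pi.neg_apply, id_eq]
    have hzt := hzne t
    rw [hgx t, hgy t, hgz t]; field_simp; ring
  have h5 : ∀ t, HasDerivAt
      (fun t => -t * ((1 / 2) * ((z t) ^ 2 * (deriv x t) ^ 2 + (z t) ^ 2 * (deriv y t) ^ 2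
        + (deriv z t) ^ 2)) + z t * deriv z t / 2) 0 t := by
    intro t
    have h := (((hasDerivAt_id t).neg.mul (h4 t)).add (((hdz t).mul (hdz2 t)).div_const 2))
    refine h.congr_deriv (Eq.symm ?_)
    simp only [Pi.pow_apply, Pi.mul_apply, Pi.sub_apply, Pi.neg_apply, id_eq]
    rw [hgz t]; ring
  have h6 : ∀ t, HasDerivAt
      (fun t => -t ^ 2 * ((1 / 2) * ((z t) ^ 2 * (deriv x t) ^ 2 + (z t) ^ 2 * (deriv y t) ^ 2
        + (deriv z t) ^ 2)) + t * z t * deriv z t - (z t) ^ 2 / 2) 0 t := by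
    intro t
    have h := (((((hasDerivAt_id t).pow 2).neg.mul (h4 t)).add
        (((hasDerivAt_id t).mul (hdz t)).mul (hdz2 t))).sub (((hdz t).pow 2).div_const 2))
    refine h.congr_deriv (Eq.symm ?_)
    simp only [Pi.pow_apply, Pi.mul_apply, Pi.sub_apply, Pi.neg_apply, id_eq]
    rw [hgz t]; ring
  exact ⟨key _ h1, key _ h2, key _ h3, key _ h4, key _ h5, key _ h6⟩
end

section
/- Let k₀, k₁, k₂, k₃, k₄, c, c′ be real constants with k₄ > 0, 4k₀k₄ − k₃² > 0 and 4(k₁² + k₂²) = 4k₀k₄ − k₃², and set D = √(4k₀k₄ − k₃²). Then the functions x(t) = (2k₁/D) · arctan((2k₄ t + k₃)/D) + c, y(t) = (2k₂/D) · arctan((2k₄ t + k₃)/D) + c′, z(t) = (k₄ t² + k₃ t + k₀)^{1/2} are defined and smooth on all of ℝ with z(t) > 0, and they satisfy the geodesic equations ẍ = −(2/z) ẋ ż, ÿ = −(2/z) ẏ ż, z̈ = z(ẋ² + ẏ²) for all t. -/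
private lemma geo_aux_A (a p q s : ℝ) (hq : q ≠ 0) (hs : s ≠ 0) (hsq : s ^ 2 = q) :
    (0 * q - a * p) / q ^ 2 = -(2 / s) * (a / q) * (p / (2 * s)) := by
  field_simp
  linear_combination (-a * p) * hsq

private lemma geo_aux_B (k₁ k₂ k₄ p q s : ℝ) (hq : q ≠ 0) (hs : s ≠ 0)
    (hsq : s ^ 2 = q) (hc : 4 * k₄ * q - p ^ 2 = 4 * (k₁ ^ 2 + k₂ ^ 2)) :
    (2 * k₄ * (2 * s) - p * (2 * (p / (2 * s)))) / (2 * s) ^ 2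
      = s * ((k₁ / q) ^ 2 + (k₂ / q) ^ 2) := by
  have h : q = s ^ 2 := hsq.symm
  subst h
  field_simp
  linear_combination hc

private lemma geo_aux_C (a p q k₄ D : ℝ) (hD : D ≠ 0) (hq : q ≠ 0) (hk : k₄ ≠ 0)
    (hkey : D ^ 2 + p ^ 2 = 4 * k₄ * q) :
    2 * a / D * (1 / (1 + (p / D) ^ 2) * (2 * k₄ / D)) = a / q := by
  have h1 : 1 + (p / D) ^ 2 = (4 * k₄ * q) / D ^ 2 := by
    rw [← hkey]; field_simp
  rw [h1]
  field_simp
  ring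

/-- The explicit solution of the geodesic equations of the metric
`ds² = z²(dx² + dy²) + dz²` obtained by quadratures from the first integrals. -/
theorem geodesic_explicit_solution
    (k₀ k₁ k₂ k₃ k₄ c c' D : ℝ)
    (hk₄ : 0 < k₄)
    (hdisc : 0 < 4 * k₀ * k₄ - k₃ ^ 2)
    (hcompat : 4 * (k₁ ^ 2 + k₂ ^ 2) = 4 * k₀ * k₄ - k₃ ^ 2)
    (hD : D = Real.sqrt (4 * k₀ * k₄ - k₃ ^ 2))
    (x y z : ℝ → ℝ)
    (hxdef : ∀ t, x t = (2 * k₁ / D) * Real.arctan ((2 * k₄ * t + k₃) / D) + c)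
    (hydef : ∀ t, y t = (2 * k₂ / D) * Real.arctan ((2 * k₄ * t + k₃) / D) + c')
    (hzdef : ∀ t, z t = Real.sqrt (k₄ * t ^ 2 + k₃ * t + k₀)) :
    -- the functions are smooth on all of ℝ
    ContDiff ℝ (⊤ : ℕ∞) x ∧ ContDiff ℝ (⊤ : ℕ∞) y ∧ ContDiff ℝ (⊤ : ℕ∞) z ∧
    -- `z` is everywhere positive (so everything is well defined)
    (∀ t, 0 < z t) ∧
    -- and they satisfy the geodesic equations
    (∀ t, deriv (deriv x) t = -(2 / z t) * deriv x t * deriv z t) ∧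
    (∀ t, deriv (deriv y) t = -(2 / z t) * deriv y t * deriv z t) ∧
    (∀ t, deriv (deriv z) t = z t * ((deriv x t) ^ 2 + (deriv y t) ^ 2)) := by
  have hxf : x = fun t => (2 * k₁ / D) * Real.arctan ((2 * k₄ * t + k₃) / D) + c :=
    funext hxdef
  have hyf : y = fun t => (2 * k₂ / D) * Real.arctan ((2 * k₄ * t + k₃) / D) + c' :=
    funext hydef
  have hzf : z = fun t => Real.sqrt (k₄ * t ^ 2 + k₃ * t + k₀) := funext hzdef
  subst hxf hyf hzf
  have hQpos : ∀ t : ℝ, 0 < k₄ * t ^ 2 + k₃ * t + k₀ := by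
    intro t; nlinarith [sq_nonneg (2 * k₄ * t + k₃)]
  have hQne : ∀ t : ℝ, k₄ * t ^ 2 + k₃ * t + k₀ ≠ 0 := fun t => (hQpos t).ne'
  have hDpos : 0 < D := by rw [hD]; exact Real.sqrt_pos.2 hdisc
  have hDne : D ≠ 0 := hDpos.ne'
  have hD2 : D ^ 2 = 4 * k₀ * k₄ - k₃ ^ 2 := by
    rw [hD, sq, Real.mul_self_sqrt hdisc.le]
  have hsq : ∀ t : ℝ, Real.sqrt (k₄ * t ^ 2 + k₃ * t + k₀) ^ 2
      = k₄ * t ^ 2 + k₃ * t + k₀ := fun t => Real.sq_sqrt (hQpos t).le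
  have hsqrtpos : ∀ t : ℝ, 0 < Real.sqrt (k₄ * t ^ 2 + k₃ * t + k₀) :=
    fun t => Real.sqrt_pos.2 (hQpos t)
  have hsqrtne : ∀ t : ℝ, Real.sqrt (k₄ * t ^ 2 + k₃ * t + k₀) ≠ 0 :=
    fun t => (hsqrtpos t).ne'
  -- derivative facts
  have hQ' : ∀ t : ℝ, HasDerivAt (fun s : ℝ => k₄ * s ^ 2 + k₃ * s + k₀)
      (2 * k₄ * t + k₃) t := by
    intro t
    have h1 := (((hasDerivAt_pow 2 t).const_mul k₄).add
      ((hasDerivAt_id t).const_mul k₃)).add_const k₀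
    exact h1.congr_deriv (by push_cast; ring)
  have hu : ∀ t : ℝ, HasDerivAt (fun s => (2 * k₄ * s + k₃) / D) (2 * k₄ / D) t := by
    intro t
    have h1 : HasDerivAt (fun s : ℝ => 2 * k₄ * s + k₃) (2 * k₄) t := by
      simpa using ((hasDerivAt_id t).const_mul (2 * k₄)).add_const k₃
    exact h1.div_const D
  have hkey : ∀ t : ℝ, D ^ 2 + (2 * k₄ * t + k₃) ^ 2
      = 4 * k₄ * (k₄ * t ^ 2 + k₃ * t + k₀) := by
    intro t; rw [hD2]; ring
  -- first derivative of x-type functions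
  have hx' : ∀ (a : ℝ) (cc : ℝ) (t : ℝ),
      HasDerivAt (fun s => (2 * a / D) * Real.arctan ((2 * k₄ * s + k₃) / D) + cc)
        (a / (k₄ * t ^ 2 + k₃ * t + k₀)) t := by
    intro a cc t
    have h1 := (Real.hasDerivAt_arctan ((2 * k₄ * t + k₃) / D)).comp t (hu t)
    have h2 := (h1.const_mul (2 * a / D)).add_const cc
    have h3 := geo_aux_C a (2 * k₄ * t + k₃) (k₄ * t ^ 2 + k₃ * t + k₀) k₄ D hDne
      (hQne t) hk₄.ne' (hkey t)
    rw [← h3]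
    exact h2
  have hz' : ∀ t : ℝ, HasDerivAt (fun s => Real.sqrt (k₄ * s ^ 2 + k₃ * s + k₀))
      ((2 * k₄ * t + k₃) / (2 * Real.sqrt (k₄ * t ^ 2 + k₃ * t + k₀))) t := by
    intro t
    exact (hQ' t).sqrt (hQne t)
  have hderivx : deriv (fun s => (2 * k₁ / D) * Real.arctan ((2 * k₄ * s + k₃) / D) + c)
      = fun t => k₁ / (k₄ * t ^ 2 + k₃ * t + k₀) := funext fun t => (hx' k₁ c t).deriv
  have hderivy : deriv (fun s => (2 * k₂ / D) * Real.arctan ((2 * k₄ * s + k₃) / D) + c')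
      = fun t => k₂ / (k₄ * t ^ 2 + k₃ * t + k₀) := funext fun t => (hx' k₂ c' t).deriv
  have hderivz : deriv (fun s => Real.sqrt (k₄ * s ^ 2 + k₃ * s + k₀))
      = fun t => (2 * k₄ * t + k₃) / (2 * Real.sqrt (k₄ * t ^ 2 + k₃ * t + k₀)) :=
    funext fun t => (hz' t).deriv
  -- second derivatives
  have hx'' : ∀ (a : ℝ) (t : ℝ),
      HasDerivAt (fun s => a / (k₄ * s ^ 2 + k₃ * s + k₀))
        ((0 * (k₄ * t ^ 2 + k₃ * t + k₀) - a * (2 * k₄ * t + k₃))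
          / (k₄ * t ^ 2 + k₃ * t + k₀) ^ 2) t := by
    intro a t
    exact (hasDerivAt_const t a).div (hQ' t) (hQne t)
  have hz'' : ∀ t : ℝ, HasDerivAt
      (fun s => (2 * k₄ * s + k₃) / (2 * Real.sqrt (k₄ * s ^ 2 + k₃ * s + k₀)))
      ((2 * k₄ * (2 * Real.sqrt (k₄ * t ^ 2 + k₃ * t + k₀)) - (2 * k₄ * t + k₃) *
        (2 * ((2 * k₄ * t + k₃) / (2 * Real.sqrt (k₄ * t ^ 2 + k₃ * t + k₀)))))
        / (2 * Real.sqrt (k₄ * t ^ 2 + k₃ * t + k₀)) ^ 2) t := by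
    intro t
    have hnum : HasDerivAt (fun s : ℝ => 2 * k₄ * s + k₃) (2 * k₄) t := by
      simpa using ((hasDerivAt_id t).const_mul (2 * k₄)).add_const k₃
    have hden : HasDerivAt (fun s => 2 * Real.sqrt (k₄ * s ^ 2 + k₃ * s + k₀))
        (2 * ((2 * k₄ * t + k₃) / (2 * Real.sqrt (k₄ * t ^ 2 + k₃ * t + k₀)))) t :=
      (hz' t).const_mul 2
    exact hnum.div hden (mul_ne_zero two_ne_zero (hsqrtne t))
  -- smoothness
  have hcQ : ContDiff ℝ (⊤ : ℕ∞) (fun s : ℝ => k₄ * s ^ 2 + k₃ * s + k₀) := by fun_prop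
  have hsmoothx : ∀ (a cc : ℝ), ContDiff ℝ (⊤ : ℕ∞)
      (fun s => (2 * a / D) * Real.arctan ((2 * k₄ * s + k₃) / D) + cc) := by
    intro a cc
    have hinner : ContDiff ℝ (⊤ : ℕ∞) (fun s : ℝ => (2 * k₄ * s + k₃) / D) :=
      ((contDiff_const.mul contDiff_id).add contDiff_const).div_const D
    exact (contDiff_const.mul (Real.contDiff_arctan.comp hinner)).add contDiff_const
  refine ⟨hsmoothx k₁ c, hsmoothx k₂ c', ?_, fun t => hsqrtpos t, ?_, ?_, ?_⟩
  · rw [contDiff_iff_contDiffAt]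
    intro t
    exact (hcQ.contDiffAt).sqrt (hQne t)
  · intro t
    rw [hderivx, (hx'' k₁ t).deriv, hderivz]
    exact geo_aux_A k₁ (2 * k₄ * t + k₃) (k₄ * t ^ 2 + k₃ * t + k₀) _ (hQne t)
      (hsqrtne t) (hsq t)
  · intro t
    rw [hderivy, (hx'' k₂ t).deriv, hderivz]
    exact geo_aux_A k₂ (2 * k₄ * t + k₃) (k₄ * t ^ 2 + k₃ * t + k₀) _ (hQne t)
      (hsqrtne t) (hsq t)
  · intro t
    rw [hderivz, (hz'' t).deriv, hderivx, hderivy]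
    refine geo_aux_B k₁ k₂ k₄ (2 * k₄ * t + k₃) (k₄ * t ^ 2 + k₃ * t + k₀) _ (hQne t)
      (hsqrtne t) (hsq t) ?_
    linarith [hkey t, hD2, hcompat]
end

section
/- Let x, y : ℝ → ℝ be smooth functions satisfying the Whittaker system ẍ = x and ÿ = ẋ for all t ∈ ℝ. Then each of the following functions of t is constant: (1) J₁₂(t) = ẏ(t) − x(t); (2) J₁₃(t) = t(ẏ(t) − x(t)) + ẋ(t) − y(t); (3) J₂₁₊(t) = e^{t}(ẋ(t) − x(t)); (4) J₂₁₋(t) = e^{−t}(ẋ(t) + x(t)); and consequently (5) ẋ(t)² − x(t)² = J₂₁₊ · J₂₁₋ is constant. -/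
private lemma const_of_deriv_zero (f : ℝ → ℝ) (hf : Differentiable ℝ f)
    (h : ∀ t, deriv f t = 0) : ∃ c : ℝ, ∀ t, f t = c :=
  ⟨f 0, fun t => is_const_of_deriv_eq_zero hf h t 0⟩

/-- First integrals of the Whittaker dynamical system `ẍ = x`, `ÿ = ẋ`. -/
theorem whittaker_first_integrals
    (x y : ℝ → ℝ)
    (hx : ContDiff ℝ (⊤ : ℕ∞) x) (hy : ContDiff ℝ (⊤ : ℕ∞) y)
    (hodex : ∀ t, deriv (deriv x) t = x t)
    (hodey : ∀ t, deriv (deriv y) t = deriv x t) :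
    -- (1) `J₁₂ = ẏ − x` is constant
    (∃ c : ℝ, ∀ t, deriv y t - x t = c) ∧
    -- (2) `J₁₃ = t(ẏ − x) + ẋ − y` is constant
    (∃ c : ℝ, ∀ t, t * (deriv y t - x t) + deriv x t - y t = c) ∧
    -- (3) `J₂₁₊ = e^t (ẋ − x)` is constant
    (∃ c : ℝ, ∀ t, Real.exp t * (deriv x t - x t) = c) ∧
    -- (4) `J₂₁₋ = e^{−t} (ẋ + x)` is constant
    (∃ c : ℝ, ∀ t, Real.exp (-t) * (deriv x t + x t) = c) ∧
    -- (5) consequently `ẋ² − x² = J₂₁₊ · J₂₁₋` is constant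
    ((∀ t, (deriv x t) ^ 2 - (x t) ^ 2 =
        (Real.exp t * (deriv x t - x t)) * (Real.exp (-t) * (deriv x t + x t))) ∧
      ∃ c : ℝ, ∀ t, (deriv x t) ^ 2 - (x t) ^ 2 = c) := by
  have hx1 : ContDiff ℝ (⊤ : ℕ∞) (deriv x) :=
    (contDiff_infty_iff_deriv.mp (hx.of_le (by simp))).2
  have hy1 : ContDiff ℝ (⊤ : ℕ∞) (deriv y) :=
    (contDiff_infty_iff_deriv.mp (hy.of_le (by simp))).2
  have dx : Differentiable ℝ x := hx.differentiable (by simp)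
  have dy : Differentiable ℝ y := hy.differentiable (by simp)
  have dx1 : Differentiable ℝ (deriv x) := hx1.differentiable (by simp)
  have dy1 : Differentiable ℝ (deriv y) := hy1.differentiable (by simp)
  have h1 : ∃ c : ℝ, ∀ t, deriv y t - x t = c := by
    apply const_of_deriv_zero _ (dy1.sub dx)
    intro t
    rw [deriv_sub (dy1 t) (dx t), hodey t, sub_self]
  have h2 : ∃ c : ℝ, ∀ t, t * (deriv y t - x t) + deriv x t - y t = c := by
    apply const_of_deriv_zero _ (((differentiable_id.mul (dy1.sub dx)).add dx1).sub dy)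
    intro t
    rw [deriv_sub (((differentiable_id.mul (dy1.sub dx)).add dx1) t) (dy t),
      deriv_add ((differentiable_id.mul (dy1.sub dx)) t) (dx1 t),
      deriv_mul (differentiable_id t) ((dy1.sub dx) t),
      deriv_sub (dy1 t) (dx t), hodey t, hodex t, deriv_id]
    simp only [Pi.sub_apply, Pi.add_apply]
    ring
  have h3 : ∃ c : ℝ, ∀ t, Real.exp t * (deriv x t - x t) = c := by
    apply const_of_deriv_zero _ (Real.differentiable_exp.mul (dx1.sub dx))
    intro t
    rw [deriv_mul (Real.differentiable_exp t) ((dx1.sub dx) t),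
      deriv_sub (dx1 t) (dx t), hodex t, Real.deriv_exp]
    simp only [Pi.sub_apply, Pi.add_apply]
    ring
  have dnexp : Differentiable ℝ (fun t : ℝ => Real.exp (-t)) :=
    Real.differentiable_exp.comp differentiable_neg
  have dnexp' : ∀ t : ℝ, deriv (fun t : ℝ => Real.exp (-t)) t = -Real.exp (-t) := by
    intro t
    have : HasDerivAt (fun t : ℝ => Real.exp (-t)) (Real.exp (-t) * (-1)) t :=
      (Real.hasDerivAt_exp (-t)).comp t ((hasDerivAt_id t).neg)
    simpa using this.deriv
  have h4 : ∃ c : ℝ, ∀ t, Real.exp (-t) * (deriv x t + x t) = c := by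
    apply const_of_deriv_zero _ (dnexp.mul (dx1.add dx))
    intro t
    rw [deriv_mul (dnexp t) ((dx1.add dx) t),
      deriv_add (dx1 t) (dx t), hodex t, dnexp' t]
    simp only [Pi.sub_apply, Pi.add_apply]
    ring
  have key : ∀ t : ℝ, Real.exp t * Real.exp (-t) = 1 := fun t => by
    rw [← Real.exp_add, add_neg_cancel, Real.exp_zero]
  have h5 : ∀ t, (deriv x t) ^ 2 - (x t) ^ 2 =
      (Real.exp t * (deriv x t - x t)) * (Real.exp (-t) * (deriv x t + x t)) := fun t => by
    linear_combination ((x t) ^ 2 - (deriv x t) ^ 2) * key t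
  refine ⟨h1, h2, h3, h4, h5, ?_⟩
  obtain ⟨c3, hc3⟩ := h3
  obtain ⟨c4, hc4⟩ := h4
  exact ⟨c3 * c4, fun t => by rw [h5 t, hc3 t, hc4 t]⟩
end

section
/- Let m, p, k ∈ ℂ and let x, y : ℝ → ℂ be smooth functions satisfying ẍ + kx = py − 2mẋ and ÿ + ky = −px − 2mẏ for all t ∈ ℝ. Then both of the following functions of t are constant: J₂ₐ(t) = e^{2mt}[ ẋ² − ẏ² + 2m(xẋ − yẏ) + k(x² − y²) − 2pxy ] and J₂ᵦ(t) = e^{2mt}[ ẋẏ + m(yẋ + xẏ) + (p/2)(x² − y²) + kxy ]. -/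
open Complex

/-- The two time-dependent quadratic first integrals `J₂ₐ`, `J₂ᵦ` of the
autonomous linearly coupled 2d damped harmonic oscillator, valid for all
values of the constants `m`, `p`, `k`. -/
theorem damped_oscillator_general_first_integrals
    (m p k : ℂ) (x y : ℝ → ℂ)
    (hx : ContDiff ℝ (⊤ : ℕ∞) x) (hy : ContDiff ℝ (⊤ : ℕ∞) y)
    (hodex : ∀ t, deriv (deriv x) t + k * x t = p * y t - 2 * m * deriv x t)
    (hodey : ∀ t, deriv (deriv y) t + k * y t = -(p * x t) - 2 * m * deriv y t) :
    -- `J₂ₐ = e^{2mt}[ẋ² − ẏ² + 2m(xẋ − yẏ) + k(x² − y²) − 2pxy]` is constant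
    (∃ c : ℂ, ∀ t : ℝ,
      Complex.exp (2 * m * t) *
        ((deriv x t) ^ 2 - (deriv y t) ^ 2
          + 2 * m * (x t * deriv x t - y t * deriv y t)
          + k * ((x t) ^ 2 - (y t) ^ 2) - 2 * p * x t * y t) = c) ∧
    -- `J₂ᵦ = e^{2mt}[ẋẏ + m(yẋ + xẏ) + (p/2)(x² − y²) + kxy]` is constant
    (∃ c : ℂ, ∀ t : ℝ,
      Complex.exp (2 * m * t) *
        (deriv x t * deriv y t + m * (y t * deriv x t + x t * deriv y t)
          + (p / 2) * ((x t) ^ 2 - (y t) ^ 2) + k * x t * y t) = c) := by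
  have hdx : Differentiable ℝ x := hx.differentiable (by simp)
  have hdy : Differentiable ℝ y := hy.differentiable (by simp)
  have hdx2 : Differentiable ℝ (deriv x) :=
    ((contDiff_infty_iff_deriv.mp (hx.of_le (by simp))).2).differentiable (by simp)
  have hdy2 : Differentiable ℝ (deriv y) :=
    ((contDiff_infty_iff_deriv.mp (hy.of_le (by simp))).2).differentiable (by simp)
  have hx1 : ∀ t : ℝ, HasDerivAt x (deriv x t) t := fun t => (hdx t).hasDerivAt
  have hy1 : ∀ t : ℝ, HasDerivAt y (deriv y t) t := fun t => (hdy t).hasDerivAt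
  have hx2 : ∀ t : ℝ, HasDerivAt (deriv x) (deriv (deriv x) t) t :=
    fun t => (hdx2 t).hasDerivAt
  have hy2 : ∀ t : ℝ, HasDerivAt (deriv y) (deriv (deriv y) t) t :=
    fun t => (hdy2 t).hasDerivAt
  have hE : ∀ t : ℝ, HasDerivAt (fun s : ℝ => Complex.exp (2 * m * s))
      (2 * m * Complex.exp (2 * m * t)) t := by
    intro t
    have h := (((hasDerivAt_id ((t : ℝ) : ℂ)).const_mul (2 * m)).cexp).comp_ofReal
    convert h using 1
    simp [mul_comm]
    show 2 * m * cexp (2 * m * ↑t) = cexp (2 * m * ↑t) * (2 * m * 1)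
    ring
  have const : ∀ F : ℝ → ℂ, (∀ t : ℝ, HasDerivAt F 0 t) → ∀ t : ℝ, F t = F 0 :=
    fun F h t => is_const_of_deriv_eq_zero
      (fun s => (h s).differentiableAt) (fun s => (h s).deriv) t 0
  constructor
  · set G : ℝ → ℂ := fun s => Complex.exp (2 * m * s) *
      (deriv x s * deriv x s - deriv y s * deriv y s
        + 2 * m * (x s * deriv x s - y s * deriv y s)
        + k * (x s * x s - y s * y s) - 2 * p * (x s * y s)) with hG
    have hA : ∀ t : ℝ, HasDerivAt G 0 t := by
      intro t
      have h1 := ((hx2 t).mul (hx2 t)).sub ((hy2 t).mul (hy2 t))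
      have h2 := (((hx1 t).mul (hx2 t)).sub ((hy1 t).mul (hy2 t))).const_mul (2 * m)
      have h3 := (((hx1 t).mul (hx1 t)).sub ((hy1 t).mul (hy1 t))).const_mul k
      have h4 := ((hx1 t).mul (hy1 t)).const_mul (2 * p)
      have hQ := ((h1.add h2).add h3).sub h4
      have h := (hE t).mul hQ
      convert h using 1
      · rfl
      · rfl
      simp only [Pi.add_apply, Pi.sub_apply, Pi.mul_apply]
      linear_combination (-(Complex.exp (2 * m * (t : ℂ))) * (2 * deriv x t + 2 * m * x t)) * hodex t
        + (Complex.exp (2 * m * (t : ℂ)) * (2 * deriv y t + 2 * m * y t)) * hodey t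
    refine ⟨G 0, fun t => ?_⟩
    have := const G hA t
    rw [hG] at this
    linear_combination this
  · set G : ℝ → ℂ := fun s => Complex.exp (2 * m * s) *
      (deriv x s * deriv y s + m * (y s * deriv x s + x s * deriv y s)
        + p / 2 * (x s * x s - y s * y s) + k * (x s * y s)) with hG
    have hA : ∀ t : ℝ, HasDerivAt G 0 t := by
      intro t
      have h1 := (hx2 t).mul (hy2 t)
      have h2 := (((hy1 t).mul (hx2 t)).add ((hx1 t).mul (hy2 t))).const_mul m
      have h3 := (((hx1 t).mul (hx1 t)).sub ((hy1 t).mul (hy1 t))).const_mul (p / 2)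
      have h4 := ((hx1 t).mul (hy1 t)).const_mul k
      have hQ := ((h1.add h2).add h3).add h4
      have h := (hE t).mul hQ
      convert h using 1
      · rfl
      · rfl
      simp only [Pi.add_apply, Pi.sub_apply, Pi.mul_apply]
      linear_combination (-(Complex.exp (2 * m * (t : ℂ))) * (deriv y t + m * y t)) * hodex t
        + (-(Complex.exp (2 * m * (t : ℂ))) * (deriv x t + m * x t)) * hodey t
    refine ⟨G 0, fun t => ?_⟩
    have := const G hA t
    rw [hG] at this
    linear_combination this
end

section
/- Let m, p, k ∈ ℂ with m ≠ 0, p ≠ 0 and k = p²/(4m²), and let x, y : ℝ → ℂ be smooth functions satisfying ẍ + kx = py − 2mẋ and ÿ + ky = −px − 2mẏ for all t ∈ ℝ. Then both of the following functions of t are constant: J₁₁(t) = (1/(4m))(ẋ² + ẏ²) + (x + (k/p) y) ẋ + (y − (k/p) x) ẏ + (k/(4m) + m)(x² + y²) and J₂₁(t) = e^{4mt}[ ẋ² + ẏ² − (p/m)(y ẋ − x ẏ) + (p²/(4m²))(x² + y²) ]. -/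
set_option maxHeartbeats 1000000


open Complex

lemma const_of_hasDerivAt_zero' (f : ℝ → ℂ) (h : ∀ t, HasDerivAt f 0 t) :
    ∃ c : ℂ, ∀ t, f t = c := by
  refine ⟨f 0, fun t => ?_⟩
  exact is_const_of_deriv_eq_zero (fun s => (h s).differentiableAt)
    (fun s => (h s).deriv) t 0

/-- For `k = p²/(4m²)` the linearly coupled 2d damped harmonic oscillator admits
the additional quadratic first integrals `J₁₁` and `J₂₁`. -/
theorem damped_oscillator_first_integrals_k_eq_p_sq
    (m p k : ℂ) (hm : m ≠ 0) (hp : p ≠ 0)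
    (hk : k = p ^ 2 / (4 * m ^ 2))
    (x y : ℝ → ℂ)
    (hx : ContDiff ℝ (⊤ : ℕ∞) x) (hy : ContDiff ℝ (⊤ : ℕ∞) y)
    (hodex : ∀ t, deriv (deriv x) t + k * x t = p * y t - 2 * m * deriv x t)
    (hodey : ∀ t, deriv (deriv y) t + k * y t = -(p * x t) - 2 * m * deriv y t) :
    -- `J₁₁` is constant
    (∃ c : ℂ, ∀ t : ℝ,
      (1 / (4 * m)) * ((deriv x t) ^ 2 + (deriv y t) ^ 2)
        + (x t + (k / p) * y t) * deriv x t
        + (y t - (k / p) * x t) * deriv y t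
        + (k / (4 * m) + m) * ((x t) ^ 2 + (y t) ^ 2) = c) ∧
    -- `J₂₁` is constant
    (∃ c : ℂ, ∀ t : ℝ,
      Complex.exp (4 * m * t) *
        ((deriv x t) ^ 2 + (deriv y t) ^ 2
          - (p / m) * (y t * deriv x t - x t * deriv y t)
          + (p ^ 2 / (4 * m ^ 2)) * ((x t) ^ 2 + (y t) ^ 2)) = c) := by
  have hxd : Differentiable ℝ x := hx.differentiable (by simp)
  have hyd : Differentiable ℝ y := hy.differentiable (by simp)
  have hxd' : Differentiable ℝ (deriv x) :=
    ((contDiff_infty_iff_deriv.mp (hx.of_le (by simp))).2).differentiable (by norm_num)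
  have hyd' : Differentiable ℝ (deriv y) :=
    ((contDiff_infty_iff_deriv.mp (hy.of_le (by simp))).2).differentiable (by norm_num)
  constructor
  · apply const_of_hasDerivAt_zero'
    intro t
    have hX : HasDerivAt x (deriv x t) t := (hxd t).hasDerivAt
    have hY : HasDerivAt y (deriv y t) t := (hyd t).hasDerivAt
    have hX' : HasDerivAt (deriv x) (deriv (deriv x) t) t := (hxd' t).hasDerivAt
    have hY' : HasDerivAt (deriv y) (deriv (deriv y) t) t := (hyd' t).hasDerivAt
    have hX2 : HasDerivAt (fun s => x s ^ 2) (deriv x t * x t + x t * deriv x t) t := by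
      simpa [pow_two, Pi.mul_def] using hX.mul hX
    have hY2 : HasDerivAt (fun s => y s ^ 2) (deriv y t * y t + y t * deriv y t) t := by
      simpa [pow_two, Pi.mul_def] using hY.mul hY
    have hX'2 : HasDerivAt (fun s => deriv x s ^ 2)
        (deriv (deriv x) t * deriv x t + deriv x t * deriv (deriv x) t) t := by
      simpa [pow_two, Pi.mul_def] using hX'.mul hX'
    have hY'2 : HasDerivAt (fun s => deriv y s ^ 2)
        (deriv (deriv y) t * deriv y t + deriv y t * deriv (deriv y) t) t := by
      simpa [pow_two, Pi.mul_def] using hY'.mul hY'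
    have H := (((((hX'2.add hY'2).const_mul (1/(4*m))).add
        ((hX.add ((hY.const_mul (k/p)))).mul hX')).add
        ((hY.sub (hX.const_mul (k/p))).mul hY')).add
        ((hX2.add hY2).const_mul (k/(4*m)+m)))
    refine H.congr_deriv ?_
    symm
    simp only [Pi.add_apply, Pi.sub_apply, Pi.mul_apply]
    have ex : deriv (deriv x) t = p * y t - k * x t - 2 * m * deriv x t := by
      linear_combination hodex t
    have ey : deriv (deriv y) t = -(p * x t) - k * y t - 2 * m * deriv y t := by
      linear_combination hodey t
    have hk' : 4 * m ^ 2 * k = p ^ 2 := by rw [hk]; field_simp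
    rw [ex, ey]
    rw [hk]
    field_simp
    ring
  · apply const_of_hasDerivAt_zero'
    intro t
    have hX : HasDerivAt x (deriv x t) t := (hxd t).hasDerivAt
    have hY : HasDerivAt y (deriv y t) t := (hyd t).hasDerivAt
    have hX' : HasDerivAt (deriv x) (deriv (deriv x) t) t := (hxd' t).hasDerivAt
    have hY' : HasDerivAt (deriv y) (deriv (deriv y) t) t := (hyd' t).hasDerivAt
    have hE : HasDerivAt (fun t : ℝ => Complex.exp (4 * m * t))
        (Complex.exp (4 * m * t) * (4 * m)) t := by
      have h1 : HasDerivAt (fun t : ℝ => ((t : ℂ))) 1 t :=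
        (hasDerivAt_id t).ofReal_comp
      have h2 : HasDerivAt (fun t : ℝ => (4 * m) * (t : ℂ)) (4 * m) t := by
        simpa using h1.const_mul (4 * m)
      simpa using h2.cexp
    have hX2 : HasDerivAt (fun s => x s ^ 2) (deriv x t * x t + x t * deriv x t) t := by
      simpa [pow_two, Pi.mul_def] using hX.mul hX
    have hY2 : HasDerivAt (fun s => y s ^ 2) (deriv y t * y t + y t * deriv y t) t := by
      simpa [pow_two, Pi.mul_def] using hY.mul hY
    have hX'2 : HasDerivAt (fun s => deriv x s ^ 2)
        (deriv (deriv x) t * deriv x t + deriv x t * deriv (deriv x) t) t := by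
      simpa [pow_two, Pi.mul_def] using hX'.mul hX'
    have hY'2 : HasDerivAt (fun s => deriv y s ^ 2)
        (deriv (deriv y) t * deriv y t + deriv y t * deriv (deriv y) t) t := by
      simpa [pow_two, Pi.mul_def] using hY'.mul hY'
    have H := hE.mul (((hX'2.add hY'2).sub
        (((hY.mul hX').sub (hX.mul hY')).const_mul (p/m))).add
        ((hX2.add hY2).const_mul (p^2/(4*m^2))))
    refine H.congr_deriv ?_
    symm
    simp only [Pi.add_apply, Pi.sub_apply, Pi.mul_apply]
    have ex : deriv (deriv x) t = p * y t - k * x t - 2 * m * deriv x t := by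
      linear_combination hodex t
    have ey : deriv (deriv y) t = -(p * x t) - k * y t - 2 * m * deriv y t := by
      linear_combination hodey t
    have hk' : 4 * m ^ 2 * k = p ^ 2 := by rw [hk]; field_simp
    have key : (0:ℂ) =
        4 * m * ((deriv x t) ^ 2 + (deriv y t) ^ 2
            - p / m * (y t * deriv x t - x t * deriv y t)
            + p ^ 2 / (4 * m ^ 2) * ((x t) ^ 2 + (y t) ^ 2)) +
          ((p * y t - k * x t - 2 * m * deriv x t) * deriv x t
              + deriv x t * (p * y t - k * x t - 2 * m * deriv x t)
              + ((-(p * x t) - k * y t - 2 * m * deriv y t) * deriv y t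
                + deriv y t * (-(p * x t) - k * y t - 2 * m * deriv y t))
            - p / m * (deriv y t * deriv x t
                + y t * (p * y t - k * x t - 2 * m * deriv x t)
                - (deriv x t * deriv y t
                  + x t * (-(p * x t) - k * y t - 2 * m * deriv y t)))
            + p ^ 2 / (4 * m ^ 2) * (deriv x t * x t + x t * deriv x t
                + (deriv y t * y t + y t * deriv y t))) := by
      rw [hk]
      field_simp
      ring
    rw [ex, ey]
    linear_combination Complex.exp (4 * m * (t : ℂ)) * key
end

section
/- Let m, p, k ∈ ℂ with k = ip, and let x, y : ℝ → ℂ be smooth functions satisfying ẍ + kx = py − 2mẋ and ÿ + ky = −px − 2mẏ for all t ∈ ℝ. Then the functions J₁₂(t) = ẋ − iẏ + 2m(x − iy) and J₂₉(t) = e^{2mt}(ẋ − iẏ) are constant; moreover, if m ≠ 0 and c₁, c₂ denote the (constant) values of J₁₂ and J₂₉ respectively, then for all t: x(t) − i y(t) = −(c₂/(2m)) e^{−2mt} + c₁/(2m). -/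
open Complex

/-- For `k = ip` the linearly coupled 2d damped harmonic oscillator admits the
linear first integrals `J₁₂ = ẋ − iẏ + 2m(x − iy)` and `J₂₉ = e^{2mt}(ẋ − iẏ)`,
from which the solution `x − iy` is obtained by quadrature. -/
theorem damped_oscillator_first_integrals_k_eq_ip
    (m p k : ℂ) (hk : k = Complex.I * p)
    (x y : ℝ → ℂ)
    (hx : ContDiff ℝ (⊤ : ℕ∞) x) (hy : ContDiff ℝ (⊤ : ℕ∞) y)
    (hodex : ∀ t, deriv (deriv x) t + k * x t = p * y t - 2 * m * deriv x t)
    (hodey : ∀ t, deriv (deriv y) t + k * y t = -(p * x t) - 2 * m * deriv y t) :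
    -- `J₁₂` is constant
    (∃ c : ℂ, ∀ t : ℝ,
      deriv x t - Complex.I * deriv y t + 2 * m * (x t - Complex.I * y t) = c) ∧
    -- `J₂₉` is constant
    (∃ c : ℂ, ∀ t : ℝ,
      Complex.exp (2 * m * t) * (deriv x t - Complex.I * deriv y t) = c) ∧
    -- if `m ≠ 0` and `c₁`, `c₂` are the values of `J₁₂`, `J₂₉`, then
    -- `x − iy = −(c₂/(2m)) e^{−2mt} + c₁/(2m)`
    (m ≠ 0 → ∀ c₁ c₂ : ℂ,
      (∀ t : ℝ,
        deriv x t - Complex.I * deriv y t + 2 * m * (x t - Complex.I * y t) = c₁) →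
      (∀ t : ℝ,
        Complex.exp (2 * m * t) * (deriv x t - Complex.I * deriv y t) = c₂) →
      ∀ t : ℝ,
        x t - Complex.I * y t
          = -(c₂ / (2 * m)) * Complex.exp (-(2 * m * t)) + c₁ / (2 * m)) := by
  have hdx : Differentiable ℝ x := hx.differentiable (by simp)
  have hdy : Differentiable ℝ y := hy.differentiable (by simp)
  have hdx' : Differentiable ℝ (deriv x) :=
    (contDiff_infty_iff_deriv.mp (hx.of_le (by simp))).2.differentiable
      (by simp)
  have hdy' : Differentiable ℝ (deriv y) :=
    (contDiff_infty_iff_deriv.mp (hy.of_le (by simp))).2.differentiable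
      (by simp)
  -- the key algebraic identity: u'' + 2 m u' = 0 where u = x - i y
  have key : ∀ t : ℝ,
      deriv (deriv x) t - Complex.I * deriv (deriv y) t
        + 2 * m * (deriv x t - Complex.I * deriv y t) = 0 := by
    intro t
    have h1 := hodex t
    have h2 := hodey t
    linear_combination h1 - Complex.I * h2 + p * y t * Complex.I_mul_I
      + (Complex.I * y t - x t) * hk
  -- derivative of u' = x' - i y'
  have hD : ∀ t : ℝ, HasDerivAt (fun s => deriv x s - Complex.I * deriv y s)
      (deriv (deriv x) t - Complex.I * deriv (deriv y) t) t := fun t =>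
    (hdx' t).hasDerivAt.sub ((hdy' t).hasDerivAt.const_mul Complex.I)
  -- derivative of J₁₂
  have hF : ∀ t : ℝ, HasDerivAt
      (fun s => deriv x s - Complex.I * deriv y s + 2 * m * (x s - Complex.I * y s))
      0 t := by
    intro t
    have h := (hD t).add
      (((hdx t).hasDerivAt.sub ((hdy t).hasDerivAt.const_mul Complex.I)).const_mul (2 * m))
    rw [key t] at h; exact h
  -- derivative of the exponential
  have hE : ∀ t : ℝ, HasDerivAt (fun s : ℝ => Complex.exp (2 * m * s))
      (2 * m * Complex.exp (2 * m * t)) t := by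
    intro t
    have h1 : HasDerivAt (fun s : ℝ => 2 * m * (s : ℂ)) (2 * m) t := by
      simpa using (Complex.ofRealCLM.hasDerivAt (x := t)).const_mul (2 * m)
    simpa [mul_comm] using h1.cexp
  -- derivative of J₂₉
  have hG : ∀ t : ℝ, HasDerivAt
      (fun s : ℝ => Complex.exp (2 * m * s) * (deriv x s - Complex.I * deriv y s))
      0 t := by
    intro t
    have h := (hE t).mul (hD t)
    have hz : 2 * m * Complex.exp (2 * m * t) * (deriv x t - Complex.I * deriv y t)
        + Complex.exp (2 * m * t)
          * (deriv (deriv x) t - Complex.I * deriv (deriv y) t) = 0 := by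
      have := key t
      linear_combination Complex.exp (2 * m * t) * this
    rw [hz] at h; exact h
  refine ⟨⟨deriv x 0 - Complex.I * deriv y 0 + 2 * m * (x 0 - Complex.I * y 0),
      fun t => ?_⟩,
    ⟨Complex.exp (2 * m * (0 : ℝ)) * (deriv x 0 - Complex.I * deriv y 0),
      fun t => ?_⟩, ?_⟩
  · exact is_const_of_deriv_eq_zero (fun t => (hF t).differentiableAt)
      (fun t => (hF t).deriv) t 0
  · exact is_const_of_deriv_eq_zero (fun t => (hG t).differentiableAt)
      (fun t => (hG t).deriv) t 0
  · intro hm c₁ c₂ h1 h2 t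
    have hEE : Complex.exp (-(2 * m * t)) * Complex.exp (2 * m * t) = 1 := by
      rw [← Complex.exp_add]; simp
    have h1t := h1 t
    have h2t := h2 t
    field_simp
    linear_combination h1t - Complex.exp (-(2 * m * ↑t)) * h2t
      + (deriv x t - Complex.I * deriv y t) * hEE
end

section
/- Let m, k, λ ∈ ℂ, set p = i(λ² − 2λm + k), and let x, y : ℝ → ℂ be smooth functions satisfying ẍ + kx = py − 2mẋ and ÿ + ky = −px − 2mẏ for all t ∈ ℝ. Then the function J₂₈(t) = e^{λt}( −iλẋ + λẏ − ikx + ipy + px + ky ) is constant in t. -/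
open Complex

/-- For `p = i(λ² − 2λm + k)` the linearly coupled 2d damped harmonic oscillator
admits the exponential linear first integral
`J₂₈ = e^{λt}(−iλẋ + λẏ − ikx + ipy + px + ky)`. -/
theorem damped_oscillator_exponential_linear_first_integral
    (m k lam p : ℂ) (hp : p = Complex.I * (lam ^ 2 - 2 * lam * m + k))
    (x y : ℝ → ℂ)
    (hx : ContDiff ℝ (⊤ : ℕ∞) x) (hy : ContDiff ℝ (⊤ : ℕ∞) y)
    (hodex : ∀ t, deriv (deriv x) t + k * x t = p * y t - 2 * m * deriv x t)
    (hodey : ∀ t, deriv (deriv y) t + k * y t = -(p * x t) - 2 * m * deriv y t) :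
    ∃ c : ℂ, ∀ t : ℝ,
      Complex.exp (lam * t) *
        (-(Complex.I * lam * deriv x t) + lam * deriv y t
          - Complex.I * k * x t + Complex.I * p * y t + p * x t + k * y t) = c := by
  subst hp
  set p : ℂ := Complex.I * (lam ^ 2 - 2 * lam * m + k) with hp
  have hxd : Differentiable ℝ x := hx.differentiable (by simp)
  have hyd : Differentiable ℝ y := hy.differentiable (by simp)
  have hx2 : ContDiff ℝ ((⊤ : ℕ∞) : WithTop ℕ∞) x := hx.of_le (by simp)
  have hy2 : ContDiff ℝ ((⊤ : ℕ∞) : WithTop ℕ∞) y := hy.of_le (by simp)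
  have hx'd : Differentiable ℝ (deriv x) :=
    ((contDiff_infty_iff_deriv.mp hx2).2).differentiable (by simp)
  have hy'd : Differentiable ℝ (deriv y) :=
    ((contDiff_infty_iff_deriv.mp hy2).2).differentiable (by simp)
  set J : ℝ → ℂ := fun t =>
    Complex.exp (lam * t) *
      (-(Complex.I * lam * deriv x t) + lam * deriv y t
        - Complex.I * k * x t + Complex.I * p * y t + p * x t + k * y t) with hJ
  have key : ∀ s : ℝ, HasDerivAt J 0 s := by
    intro s
    have hE : HasDerivAt (fun t : ℝ => Complex.exp (lam * t))
        (Complex.exp (lam * s) * lam) s := by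
      have h1 : HasDerivAt (fun t : ℝ => (lam * t : ℂ)) lam s := by
        simpa using (Complex.ofRealCLM.hasDerivAt (x := s)).const_mul lam
      simpa using h1.cexp
    have hX : HasDerivAt x (deriv x s) s := (hxd s).hasDerivAt
    have hY : HasDerivAt y (deriv y s) s := (hyd s).hasDerivAt
    have hX' : HasDerivAt (deriv x) (deriv (deriv x) s) s := (hx'd s).hasDerivAt
    have hY' : HasDerivAt (deriv y) (deriv (deriv y) s) s := (hy'd s).hasDerivAt
    have hF : HasDerivAt (fun t =>
        -(Complex.I * lam * deriv x t) + lam * deriv y t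
          - Complex.I * k * x t + Complex.I * p * y t + p * x t + k * y t)
        (-(Complex.I * lam * deriv (deriv x) s) + lam * deriv (deriv y) s
          - Complex.I * k * deriv x s + Complex.I * p * deriv y s
          + p * deriv x s + k * deriv y s) s :=
      (((((hX'.const_mul (Complex.I * lam)).neg.add (hY'.const_mul lam)).sub
        (hX.const_mul (Complex.I * k))).add (hY.const_mul (Complex.I * p))).add
        (hX.const_mul p)).add (hY.const_mul k)
    have hJ' := hE.mul hF
    refine hJ'.congr_deriv (Eq.symm ?_)
    have e1 := hodex s
    have e2 := hodey s
    rw [hp] at e1 e2 ⊢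
    linear_combination (Complex.exp (lam * s) * (Complex.I * lam)) * e1
      - (Complex.exp (lam * s) * lam) * e2
      + (Complex.exp (lam * s) * (2 * lam * m - lam ^ 2 - k) * deriv y s) * Complex.I_sq
  refine ⟨J 0, fun t => ?_⟩
  have hdiff : Differentiable ℝ J := fun s => (key s).differentiableAt
  have := is_const_of_deriv_eq_zero hdiff (fun s => (key s).deriv) t 0
  simpa [hJ] using this
end

section
/- Let m, k ∈ ℂ, set p = (3i/5)(m² − k), and let x, y : ℝ → ℂ be smooth functions satisfying ẍ + kx = py − 2mẋ and ÿ + ky = −px − 2mẏ for all t ∈ ℝ. Then the following cubic-in-velocities function of t is constant: J₂₄(t) = e^{3mt}[ 3yẋ² + 3ixẏ² − 3(x + iy)ẋẏ + 3m(−iy² + xy)ẋ + 3m(−x² + ixy)ẏ + (−iy² + xy)(kx − py) + (−x² + ixy)(ky + px) ]. -/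
open Complex

/-- For `p = (3i/5)(m² − k)` the linearly coupled 2d damped harmonic oscillator
admits the cubic-in-velocities exponential first integral `J₂₄`. -/
theorem damped_oscillator_cubic_first_integral
    (m k p : ℂ) (hp : p = (3 * Complex.I / 5) * (m ^ 2 - k))
    (x y : ℝ → ℂ)
    (hx : ContDiff ℝ (⊤ : ℕ∞) x) (hy : ContDiff ℝ (⊤ : ℕ∞) y)
    (hodex : ∀ t, deriv (deriv x) t + k * x t = p * y t - 2 * m * deriv x t)
    (hodey : ∀ t, deriv (deriv y) t + k * y t = -(p * x t) - 2 * m * deriv y t) :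
    ∃ c : ℂ, ∀ t : ℝ,
      Complex.exp (3 * m * t) *
        (3 * y t * (deriv x t) ^ 2 + 3 * Complex.I * x t * (deriv y t) ^ 2
          - 3 * (x t + Complex.I * y t) * deriv x t * deriv y t
          + 3 * m * (-(Complex.I * (y t) ^ 2) + x t * y t) * deriv x t
          + 3 * m * (-((x t) ^ 2) + Complex.I * x t * y t) * deriv y t
          + (-(Complex.I * (y t) ^ 2) + x t * y t) * (k * x t - p * y t)
          + (-((x t) ^ 2) + Complex.I * x t * y t) * (k * y t + p * x t)) = c := by
  subst hp
  set p : ℂ := (3 * Complex.I / 5) * (m ^ 2 - k) with hp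
  have hx' : ContDiff ℝ ((⊤ : ℕ∞) : WithTop ℕ∞) (deriv x) := (contDiff_infty_iff_deriv.mp (hx.of_le (by simp))).2
  have hy' : ContDiff ℝ ((⊤ : ℕ∞) : WithTop ℕ∞) (deriv y) := (contDiff_infty_iff_deriv.mp (hy.of_le (by simp))).2
  have hdx : ∀ t : ℝ, HasDerivAt x (deriv x t) t :=
    fun t => (hx.differentiable (by simp) t).hasDerivAt
  have hdy : ∀ t : ℝ, HasDerivAt y (deriv y t) t :=
    fun t => (hy.differentiable (by simp) t).hasDerivAt
  have hdx2 : ∀ t : ℝ, HasDerivAt (deriv x) (deriv (deriv x) t) t :=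
    fun t => (hx'.differentiable (by simp) t).hasDerivAt
  have hdy2 : ∀ t : ℝ, HasDerivAt (deriv y) (deriv (deriv y) t) t :=
    fun t => (hy'.differentiable (by simp) t).hasDerivAt
  have key : ∀ t : ℝ, HasDerivAt (fun t : ℝ =>
      Complex.exp (3 * m * t) *
        (3 * y t * (deriv x t) ^ 2 + 3 * Complex.I * x t * (deriv y t) ^ 2
          - 3 * (x t + Complex.I * y t) * deriv x t * deriv y t
          + 3 * m * (-(Complex.I * (y t) ^ 2) + x t * y t) * deriv x t
          + 3 * m * (-((x t) ^ 2) + Complex.I * x t * y t) * deriv y t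
          + (-(Complex.I * (y t) ^ 2) + x t * y t) * (k * x t - p * y t)
          + (-((x t) ^ 2) + Complex.I * x t * y t) * (k * y t + p * x t))) 0 t := by
    intro t
    have hE : HasDerivAt (fun s : ℝ => Complex.exp (3 * m * s))
        (Complex.exp (3 * m * (t : ℂ)) * (3 * m * 1)) t :=
      ((hasDerivAt_id t).ofReal_comp.const_mul (3 * m)).cexp
    have hxp := (hasDerivAt_pow 2 (deriv x t)).comp t (hdx2 t)
    have hyp := (hasDerivAt_pow 2 (deriv y t)).comp t (hdy2 t)
    have hxq := (hasDerivAt_pow 2 (x t)).comp t (hdx t)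
    have hyq := (hasDerivAt_pow 2 (y t)).comp t (hdy t)
    have hT1 := ((hdy t).const_mul (3 : ℂ)).mul hxp
    have hT2 := ((hdx t).const_mul (3 * Complex.I)).mul hyp
    have hT3 := ((((hdx t).add ((hdy t).const_mul Complex.I)).const_mul (3 : ℂ)).mul
      (hdx2 t)).mul (hdy2 t)
    have h4i := (hyq.const_mul Complex.I).neg.add ((hdx t).mul (hdy t))
    have hT4 := (h4i.const_mul (3 * m)).mul (hdx2 t)
    have h5i := hxq.neg.add (((hdx t).const_mul Complex.I).mul (hdy t))
    have hT5 := (h5i.const_mul (3 * m)).mul (hdy2 t)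
    have hT6 := h4i.mul (((hdx t).const_mul k).sub ((hdy t).const_mul p))
    have hT7 := h5i.mul (((hdy t).const_mul k).add ((hdx t).const_mul p))
    have hG := (((((hT1.add hT2).sub hT3).add hT4).add hT5).add hT6).add hT7
    refine (hE.mul hG).congr_deriv ?_
    have e1 := hodex t
    have e2 := hodey t
    simp only [Function.comp_apply, Pi.add_apply, Pi.sub_apply, Pi.mul_apply, Pi.neg_apply]
    linear_combination
      (Complex.exp (3 * m * (t : ℂ)) *
        (6 * y t * deriv x t - 3 * (x t + Complex.I * y t) * deriv y t
          + 3 * m * (-(Complex.I * (y t) ^ 2) + x t * y t))) * e1 +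
      (Complex.exp (3 * m * (t : ℂ)) *
        (6 * Complex.I * x t * deriv y t - 3 * (x t + Complex.I * y t) * deriv x t
          + 3 * m * (-((x t) ^ 2) + Complex.I * x t * y t))) * e2 +
      (Complex.exp (3 * m * (t : ℂ)) *
        (3 * (m ^ 2 - k) * (x t * y t * deriv x t - (x t) ^ 2 * deriv y t))) * Complex.I_sq
  exact ⟨_, fun t => is_const_of_deriv_eq_zero
    (fun s => (key s).differentiableAt) (fun s => (key s).deriv) t 0⟩
end
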